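/- arXiv:math/0403233 — 7 statements merged into one kernel-verified Lean document; each statement's English description precedes it below -/
import Mathlib

section
/- The set O_N of overconvergent power series is a subring of W⟦t₁,…,t_N⟧: it contains 1 and all polynomials (i.e., the image of the polynomial ring W[t₁,…,t_N]), and it is closed under addition, negation, and multiplication. -/
/-- A multivariate power series `f` over the Witt vectors `W = W(F_q)` is *overconvergent*
if there are integers `m ≥ 1` and `b ≥ 0` such that `p ^ max(0, ⌈|J|/m⌉ - b)` divides the
coefficient `f_J` for every multi-index `J` (here `⌈|J|/m⌉ = (|J| + m - 1) / m` and the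
truncated subtraction on `ℕ` realizes `max (0, · - b)`). -/
def Overconvergent (p : ℕ) [Fact p.Prime] (n N : ℕ)
    (f : MvPowerSeries (Fin N) (WittVector p (GaloisField p n))) : Prop :=
  ∃ m b : ℕ, 1 ≤ m ∧ ∀ J : Fin N →₀ ℕ,
    (p : WittVector p (GaloisField p n)) ^ (((∑ i, J i) + m - 1) / m - b) ∣
      MvPowerSeries.coeff J f

/-- Ceil division is antitone in the divisor. -/
lemma ceil_antitone {s m₁ m : ℕ} (h1 : 1 ≤ m₁) (h : m₁ ≤ m) :
    (s + m - 1) / m ≤ (s + m₁ - 1) / m₁ := by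
  rw [← Nat.ceilDiv_eq_add_pred_div, ← Nat.ceilDiv_eq_add_pred_div]
  rw [ceilDiv_le_iff_le_mul (Nat.lt_of_lt_of_le h1 h)]
  calc s ≤ m₁ * (s ⌈/⌉ m₁) := by simpa [smul_eq_mul] using le_smul_ceilDiv (α := ℕ) (β := ℕ) h1
    _ ≤ m * (s ⌈/⌉ m₁) := Nat.mul_le_mul_right _ h

/-- Ceil division is subadditive in the numerator. -/
lemma ceil_subadd {s₁ s₂ m : ℕ} (h1 : 1 ≤ m) :
    (s₁ + s₂ + m - 1) / m ≤ (s₁ + m - 1) / m + (s₂ + m - 1) / m := by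
  simp only [← Nat.ceilDiv_eq_add_pred_div]
  rw [ceilDiv_le_iff_le_mul h1, Nat.mul_add]
  have h₁ : s₁ ≤ m * (s₁ ⌈/⌉ m) := by simpa [smul_eq_mul] using le_smul_ceilDiv (α := ℕ) (β := ℕ) h1
  have h₂ : s₂ ≤ m * (s₂ ⌈/⌉ m) := by simpa [smul_eq_mul] using le_smul_ceilDiv (α := ℕ) (β := ℕ) h1
  exact Nat.add_le_add h₁ h₂

/-- The set `O_N` of overconvergent power series over `W` is a subring of `W⟦t_1, …, t_N⟧`:
it contains `1`, contains all polynomials, and is closed under addition, negation and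
multiplication. -/
theorem overconvergent_subring (p : ℕ) [Fact p.Prime] (n N : ℕ) (hn : 1 ≤ n) (hN : 1 ≤ N) :
    Overconvergent p n N 1 ∧
    (∀ P : MvPolynomial (Fin N) (WittVector p (GaloisField p n)),
      Overconvergent p n N (P : MvPowerSeries (Fin N) (WittVector p (GaloisField p n)))) ∧
    (∀ f g : MvPowerSeries (Fin N) (WittVector p (GaloisField p n)),
      Overconvergent p n N f → Overconvergent p n N g → Overconvergent p n N (f + g)) ∧
    (∀ f : MvPowerSeries (Fin N) (WittVector p (GaloisField p n)),
      Overconvergent p n N f → Overconvergent p n N (-f)) ∧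
    (∀ f g : MvPowerSeries (Fin N) (WittVector p (GaloisField p n)),
      Overconvergent p n N f → Overconvergent p n N g → Overconvergent p n N (f * g)) := by
  set W := WittVector p (GaloisField p n)
  have hpoly : ∀ P : MvPolynomial (Fin N) W,
      Overconvergent p n N (P : MvPowerSeries (Fin N) W) := by
    intro P
    refine ⟨1, P.totalDegree, le_refl 1, fun J => ?_⟩
    rw [MvPolynomial.coeff_coe]
    by_cases hJ : J ∈ P.support
    · have hdeg : (∑ i, J i) ≤ P.totalDegree := by
        have := MvPolynomial.le_totalDegree hJ
        rwa [Finsupp.sum_fintype _ _ (fun _ => rfl)] at this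
      have : (∑ i, J i) + 1 - 1 = ∑ i, J i := by omega
      rw [this, Nat.div_one, Nat.sub_eq_zero_of_le hdeg, pow_zero]
      exact one_dvd _
    · rw [MvPolynomial.notMem_support_iff.mp hJ]
      exact dvd_zero _
  refine ⟨?_, hpoly, ?_, ?_, ?_⟩
  · simpa using hpoly 1
  · rintro f g ⟨m₁, b₁, hm₁, hf⟩ ⟨m₂, b₂, hm₂, hg⟩
    refine ⟨max m₁ m₂, max b₁ b₂, le_trans hm₁ (le_max_left _ _), fun J => ?_⟩
    rw [map_add]
    have key : ∀ (m' b' : ℕ), 1 ≤ m' → m' ≤ max m₁ m₂ → b' ≤ max b₁ b₂ →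
        ((∑ i, J i) + max m₁ m₂ - 1) / max m₁ m₂ - max b₁ b₂ ≤
          ((∑ i, J i) + m' - 1) / m' - b' := fun m' b' h1 h2 h3 =>
      tsub_le_tsub (ceil_antitone h1 h2) h3
    refine dvd_add ?_ ?_
    · exact (pow_dvd_pow _ (key m₁ b₁ hm₁ (le_max_left _ _) (le_max_left _ _))).trans (hf J)
    · exact (pow_dvd_pow _ (key m₂ b₂ hm₂ (le_max_right _ _) (le_max_right _ _))).trans (hg J)
  · rintro f ⟨m, b, hm, hf⟩
    exact ⟨m, b, hm, fun J => by rw [map_neg]; exact (hf J).neg_right⟩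
  · rintro f g ⟨m₁, b₁, hm₁, hf⟩ ⟨m₂, b₂, hm₂, hg⟩
    refine ⟨max m₁ m₂, b₁ + b₂, le_trans hm₁ (le_max_left _ _), fun J => ?_⟩
    rw [MvPowerSeries.coeff_mul]
    refine Finset.dvd_sum fun q hq => ?_
    rw [Finset.HasAntidiagonal.mem_antidiagonal] at hq
    set m := max m₁ m₂
    have hm : 1 ≤ m := le_trans hm₁ (le_max_left _ _)
    have hsum : (∑ i, J i) = (∑ i, q.1 i) + (∑ i, q.2 i) := by
      rw [← Finset.sum_add_distrib]
      exact Finset.sum_congr rfl fun i _ => by rw [← hq]; rfl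
    have hle : ((∑ i, J i) + m - 1) / m - (b₁ + b₂) ≤
        (((∑ i, q.1 i) + m₁ - 1) / m₁ - b₁) + (((∑ i, q.2 i) + m₂ - 1) / m₂ - b₂) := by
      have h1 : ((∑ i, J i) + m - 1) / m ≤
          ((∑ i, q.1 i) + m₁ - 1) / m₁ + ((∑ i, q.2 i) + m₂ - 1) / m₂ := by
        rw [hsum]
        exact (ceil_subadd hm).trans (Nat.add_le_add
          (ceil_antitone hm₁ (le_max_left _ _)) (ceil_antitone hm₂ (le_max_right _ _)))
      omega
    exact (pow_dvd_pow _ hle).trans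
      (by rw [pow_add]; exact mul_dvd_mul (hf q.1) (hg q.2))
end

section
/- Let x ∈ W⟦t₁,…,t_N⟧ be overconvergent and suppose every coefficient of x is divisible by p. Then there exists an integer m' ≥ 1 such that for every N₀ ≥ 0 and every multi-index J, the coefficient (x^{N₀})_J of the N₀-th power of x is divisible by p^{⌊N₀/2⌋ + ⌊|J|/m'⌋}. (In other words, the powers of x satisfy a valuation lower bound growing linearly both in the exponent and in the total degree.) -/
/-- `(a + b) / c ≤ a / c + b / c + 1`. -/
private lemma add_div_le_aux (a b c : ℕ) (hc : 0 < c) :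
    (a + b) / c ≤ a / c + b / c + 1 := by
  rw [Nat.div_le_iff_le_mul_add_pred hc]
  have h1 := Nat.div_add_mod a c
  have h2 := Nat.div_add_mod b c
  have h3 : a % c < c := Nat.mod_lt _ hc
  have h4 : b % c < c := Nat.mod_lt _ hc
  have hr : c * (a / c + b / c + 1) = c * (a / c) + c * (b / c) + c := by ring
  omega

/-- The key arithmetic inequality for the inductive step. -/
private lemma key_arith (m b N₀ s₁ s₂ : ℕ) (hm : 1 ≤ m) :
    ((N₀ + 1) * (2 * m * (2 * b + 3)) + 2 * (s₁ + s₂)) / (2 * (2 * m * (2 * b + 3)))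
      ≤ (N₀ * (2 * m * (2 * b + 3)) + 2 * s₁) / (2 * (2 * m * (2 * b + 3)))
        + max 1 ((s₂ + m - 1) / m - b) := by
  set m' := 2 * m * (2 * b + 3) with hm'
  have hm'pos : 0 < m' := by positivity
  have hD : 0 < 2 * m' := by positivity
  have hsplit : (N₀ + 1) * m' + 2 * (s₁ + s₂) = (N₀ * m' + 2 * s₁) + (m' + 2 * s₂) := by ring
  rw [hsplit]
  have h1 := add_div_le_aux (N₀ * m' + 2 * s₁) (m' + 2 * s₂) (2 * m') hD
  rcases lt_or_ge (2 * s₂) m' with hcase | hcase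
  · -- small s₂ : the extra quotient is zero
    have h0 : (m' + 2 * s₂) / (2 * m') = 0 := Nat.div_eq_of_lt (by omega)
    have hmax : 1 ≤ max 1 ((s₂ + m - 1) / m - b) := le_max_left _ _
    omega
  · -- large s₂ : use the overconvergence part
    have hmm' : 2 * m ≤ 2 * m' := by
      have h : m * 1 ≤ m * (2 * (2 * b + 3)) := Nat.mul_le_mul_left m (by omega)
      have h' : m' = m * (2 * (2 * b + 3)) := by rw [hm']; ring
      omega
    have hgoal : (m' + 2 * s₂) / (2 * m') + 1 + b ≤ (s₂ + m - 1) / m := by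
      have hstep : (m' + 2 * s₂) / (2 * m') + 1 + b ≤ s₂ / m := by
        rw [Nat.le_div_iff_mul_le hm]
        set t := 2 * s₂ - m' with ht
        have h2 : m' + 2 * s₂ = t + 1 * (2 * m') := by omega
        have h3 : (m' + 2 * s₂) / (2 * m') = t / (2 * m') + 1 := by
          rw [h2, Nat.add_mul_div_right _ _ hD]
        rw [h3]
        have h6 : t / (2 * m') ≤ t / (2 * m) :=
          Nat.div_le_div_left hmm' (by omega)
        have h7 : t / (2 * m) * (2 * m) ≤ t := Nat.div_mul_le_self _ _
        have h8 : (t / (2 * m') + 1 + 1 + b) * m ≤ t / (2 * m) * m + (b + 2) * m := by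
          have := Nat.mul_le_mul_right m h6
          have hexp : (t / (2 * m') + 1 + 1 + b) * m
              = t / (2 * m') * m + (b + 2) * m := by ring
          omega
        have h9 : 2 * ((b + 2) * m) ≤ m' := by
          have h : 2 * m * (b + 2) ≤ 2 * m * (2 * b + 3) :=
            Nat.mul_le_mul_left (2 * m) (by omega)
          have hexp : 2 * ((b + 2) * m) = 2 * m * (b + 2) := by ring
          omega
        have h10 : 2 * (t / (2 * m) * m) ≤ t := by
          have hexp : t / (2 * m) * (2 * m) = 2 * (t / (2 * m) * m) := by ring
          omega
        omega
      have hle : s₂ / m ≤ (s₂ + m - 1) / m :=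
        Nat.div_le_div_right (by omega)
      omega
    have hfin : (m' + 2 * s₂) / (2 * m') + 1 ≤ max 1 ((s₂ + m - 1) / m - b) := by
      have := le_max_right 1 ((s₂ + m - 1) / m - b); omega
    omega

/-- If `x` is overconvergent and all of its coefficients are divisible by `p`, then there is
an integer `m' ≥ 1` such that for all `N₀ ≥ 0` and all multi-indices `J`, the coefficient of
`x ^ N₀` at `J` is divisible by `p ^ (⌊N₀/2⌋ + ⌊|J|/m'⌋)`. -/
theorem pow_coeff_valuation_bound (p : ℕ) [Fact p.Prime] (n N : ℕ) (hn : 1 ≤ n) (hN : 1 ≤ N)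
    (x : MvPowerSeries (Fin N) (WittVector p (GaloisField p n)))
    (hx : Overconvergent p n N x)
    (hxp : ∀ J : Fin N →₀ ℕ,
      (p : WittVector p (GaloisField p n)) ∣ MvPowerSeries.coeff J x) :
    ∃ m' : ℕ, 1 ≤ m' ∧ ∀ (N₀ : ℕ) (J : Fin N →₀ ℕ),
      (p : WittVector p (GaloisField p n)) ^ (N₀ / 2 + (∑ i, J i) / m') ∣
        MvPowerSeries.coeff J (x ^ N₀) := by
  obtain ⟨m, b, hm, hdvd⟩ := hx
  refine ⟨2 * m * (2 * b + 3), ?_, ?_⟩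
  · have : 0 < 2 * m * (2 * b + 3) := by positivity
    omega
  set m' := 2 * m * (2 * b + 3) with hm'
  have hm'pos : 0 < m' := by positivity
  -- the strengthened statement
  have main : ∀ (N₀ : ℕ) (J : Fin N →₀ ℕ),
      (p : WittVector p (GaloisField p n)) ^ ((N₀ * m' + 2 * (∑ i, J i)) / (2 * m')) ∣
        MvPowerSeries.coeff J (x ^ N₀) := by
    intro N₀
    induction N₀ with
    | zero =>
        intro J
        rw [pow_zero, MvPowerSeries.coeff_one]
        by_cases hJ : J = 0
        · subst hJ
          simp
        · simp [hJ]
    | succ k ih =>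
        intro J
        rw [pow_succ, MvPowerSeries.coeff_mul]
        refine Finset.dvd_sum ?_
        rintro ⟨J₁, J₂⟩ hmem
        rw [Finset.HasAntidiagonal.mem_antidiagonal] at hmem
        have hd1 : (p : WittVector p (GaloisField p n)) ^
            max 1 (((∑ i, J₂ i) + m - 1) / m - b) ∣
            MvPowerSeries.coeff J₂ x := by
          rcases max_cases 1 (((∑ i, J₂ i) + m - 1) / m - b) with ⟨h, _⟩ | ⟨h, _⟩
          · rw [h, pow_one]; exact hxp J₂
          · rw [h]; exact hdvd J₂
        have hd2 := ih J₁
        have hsum : (∑ i, J i) = (∑ i, J₁ i) + (∑ i, J₂ i) := by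
          rw [← hmem]
          simp [Finsupp.add_apply, Finset.sum_add_distrib]
        have hexp : ((k + 1) * m' + 2 * (∑ i, J i)) / (2 * m')
            ≤ (k * m' + 2 * (∑ i, J₁ i)) / (2 * m')
              + max 1 (((∑ i, J₂ i) + m - 1) / m - b) := by
          rw [hsum]
          exact key_arith m b k (∑ i, J₁ i) (∑ i, J₂ i) hm
        calc (p : WittVector p (GaloisField p n))
              ^ (((k + 1) * m' + 2 * (∑ i, J i)) / (2 * m')) ∣
            (p : WittVector p (GaloisField p n)) ^ ((k * m' + 2 * (∑ i, J₁ i)) / (2 * m')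
              + max 1 (((∑ i, J₂ i) + m - 1) / m - b)) := pow_dvd_pow _ hexp
          _ = (p : WittVector p (GaloisField p n)) ^ ((k * m' + 2 * (∑ i, J₁ i)) / (2 * m'))
              * (p : WittVector p (GaloisField p n))
                ^ max 1 (((∑ i, J₂ i) + m - 1) / m - b) := pow_add _ _ _
          _ ∣ MvPowerSeries.coeff J₁ (x ^ k) * MvPowerSeries.coeff J₂ x :=
              mul_dvd_mul hd2 hd1
  intro N₀ J
  have hle : N₀ / 2 + (∑ i, J i) / m' ≤ (N₀ * m' + 2 * (∑ i, J i)) / (2 * m') := by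
    rw [Nat.le_div_iff_mul_le (by positivity)]
    have h1 : N₀ / 2 * 2 ≤ N₀ := Nat.div_mul_le_self _ _
    have h2 : (∑ i, J i) / m' * m' ≤ (∑ i, J i) := Nat.div_mul_le_self _ _
    calc (N₀ / 2 + (∑ i, J i) / m') * (2 * m')
        = (N₀ / 2 * 2) * m' + ((∑ i, J i) / m' * m') * 2 := by ring
      _ ≤ N₀ * m' + (∑ i, J i) * 2 :=
          add_le_add (Nat.mul_le_mul_right _ h1) (Nat.mul_le_mul_right _ h2)
      _ = N₀ * m' + 2 * (∑ i, J i) := by ring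
  exact dvd_trans (pow_dvd_pow _ hle) (main N₀ J)
end

section
/- Let x₁,…,x_s ∈ W⟦t₁,…,t_N⟧ be overconvergent series each of whose coefficients is divisible by p, and let c : ℕ^s → W be an arbitrary family of Witt-vector coefficients. Then there exists a unique power series g ∈ W⟦t₁,…,t_N⟧ such that for every multi-index J and every M ≥ 0, the difference g_J − ∑_{I ∈ ℕ^s, |I| < M} c_I · (x₁^{i₁}⋯x_s^{i_s})_J is divisible by p^M (the sum is finite); moreover this g is overconvergent. (That is, the ring of overconvergent series is weakly complete: series ∑_I c_I x₁^{i₁}⋯x_s^{i_s} with c_I ∈ W and x_i ∈ p·O_N converge in O_N.) -/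
section Aux

lemma ceil_subadd_s2 (M u v : ℕ) (hM : 1 ≤ M) :
    (u + v + M - 1) / M ≤ (u + M - 1) / M + (v + M - 1) / M := by
  have h1 : u ≤ M * ((u + M - 1) / M) := by
    have e := Nat.div_add_mod (u + M - 1) M
    have h2 : (u + M - 1) % M < M := Nat.mod_lt _ (by omega)
    omega
  have h1' : v ≤ M * ((v + M - 1) / M) := by
    have e := Nat.div_add_mod (v + M - 1) M
    have h2 : (v + M - 1) % M < M := Nat.mod_lt _ (by omega)
    omega
  rw [Nat.div_le_iff_le_mul_add_pred (by omega), Nat.mul_add]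
  omega

lemma ceil_le_max (m b M v : ℕ) (hm : 1 ≤ m) (hMm : m * (b + 1) ≤ M) :
    (v + M - 1) / M ≤ max 1 ((v + m - 1) / m - b) := by
  have hM : 1 ≤ M := by nlinarith
  rcases le_or_gt v M with hv | hv
  · refine le_trans ?_ (le_max_left _ _)
    rw [Nat.div_le_iff_le_mul_add_pred (by omega)]
    omega
  · set A := (v + M - 1) / M with hA
    have hA2 : 2 ≤ A := (Nat.le_div_iff_mul_le (by omega)).mpr (by omega)
    have h1 : A * M ≤ v + M - 1 := Nat.div_mul_le_self _ _
    set A1 := A - 1 with hA1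
    have hAe : A = A1 + 1 := by omega
    have h3 : A1 * M + M = A * M := by rw [hAe]; ring
    have h4 : A1 * M + 1 ≤ v := by omega
    have key : A1 * (m * (b + 1)) ≤ A1 * M := Nat.mul_le_mul_left _ hMm
    have hAB : A + b ≤ (v + m - 1) / m := by
      rw [Nat.le_div_iff_mul_le (by omega)]
      have expand : A1 * (m * (b + 1)) = A1 * m + A1 * (m * b) := by ring
      have h6 : 1 * (m * b) ≤ A1 * (m * b) := Nat.mul_le_mul_right _ (by omega)
      have h7 : (A + b) * m = A1 * m + m + m * b := by rw [hAe]; ring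
      omega
    refine le_trans ?_ (le_max_right _ _)
    omega

variable {p : ℕ} [hp : Fact p.Prime] {k : Type*} [Field k] [CharP k p] [PerfectRing k p]

theorem witt_pow_dvd_iff_coeff (M : ℕ) (a : WittVector p k) :
    (p : WittVector p k) ^ M ∣ a ↔ ∀ i < M, a.coeff i = 0 := by
  constructor
  · rintro ⟨b, rfl⟩
    induction M generalizing b with
    | zero => intro i hi; omega
    | succ M ih =>
      intro i hi
      have : (p : WittVector p k) ^ (M + 1) * b =
          WittVector.verschiebung (WittVector.frobenius ((p : WittVector p k) ^ M * b)) := by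
        rw [WittVector.verschiebung_frobenius]; ring
      rw [this]
      cases i with
      | zero => exact WittVector.verschiebung_coeff_zero _
      | succ i =>
        rw [WittVector.verschiebung_coeff_succ, WittVector.coeff_frobenius_charP,
          ih b i (by omega)]
        exact zero_pow hp.out.ne_zero
  · induction M generalizing a with
    | zero => intro _; exact pow_zero (p : WittVector p k) ▸ one_dvd a
    | succ M ih =>
      intro h
      set y : WittVector p k := WittVector.mk p (fun j => a.coeff (j + 1)) with hy
      have hva : WittVector.verschiebung y = a := by
        ext i
        cases i with
        | zero => rw [WittVector.verschiebung_coeff_zero, h 0 (by omega)]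
        | succ i => rw [WittVector.verschiebung_coeff_succ, hy, WittVector.coeff_mk]
      set z := (WittVector.frobeniusEquiv p k).symm y with hz
      have hfz : WittVector.frobenius z = y := (WittVector.frobeniusEquiv p k).apply_symm_apply y
      have hza : a = z * p := by rw [← hva, ← hfz, WittVector.verschiebung_frobenius]
      have hzd : (p : WittVector p k) ^ M ∣ z := by
        apply ih
        intro i hi
        have : (WittVector.frobenius z).coeff i = 0 := by
          rw [hfz, hy, WittVector.coeff_mk, h (i + 1) (by omega)]
        rw [WittVector.coeff_frobenius_charP] at this
        exact pow_eq_zero_iff hp.out.ne_zero |>.mp this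
      obtain ⟨w, hw⟩ := hzd
      exact ⟨w, by rw [hza, hw, pow_succ]; ring⟩

theorem witt_pow_dvd_sub_iff (M : ℕ) (a b : WittVector p k) :
    (p : WittVector p k) ^ M ∣ a - b ↔ ∀ i < M, a.coeff i = b.coeff i := by
  rw [witt_pow_dvd_iff_coeff]
  constructor
  · intro h i hi
    have ht : WittVector.truncate M (a - b) = 0 := by
      ext j
      rw [WittVector.coeff_truncate]
      simp [h j j.2]
    rw [map_sub, sub_eq_zero] at ht
    have := congrArg (TruncatedWittVector.coeff (⟨i, hi⟩ : Fin M)) ht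
    simpa [WittVector.coeff_truncate] using this
  · intro h i hi
    have ht : WittVector.truncate M a = WittVector.truncate M b := by
      ext j
      rw [WittVector.coeff_truncate, WittVector.coeff_truncate]
      exact h j j.2
    have h0 : WittVector.truncate M (a - b) = 0 := by rw [map_sub, ht, sub_self]
    have := congrArg (TruncatedWittVector.coeff (⟨i, hi⟩ : Fin M)) h0
    rw [WittVector.coeff_truncate] at this
    simpa using this

end Aux

/-- Weak completeness of the ring of overconvergent series: given overconvergent series
`x_1, …, x_s` all of whose coefficients are divisible by `p`, and arbitrary Witt vector
coefficients `c_I` for multi-indices `I ∈ ℕ^s`, there is a unique power series `g` whose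
coefficients are approximated modulo every power `p^M` by the finite partial sums
`∑_{|I| < M} c_I x_1^{i_1} ⋯ x_s^{i_s}`; moreover `g` is overconvergent.
(Note that `|I| < M` forces each `i_j < M`, so the sum below is over a finite set.) -/
theorem weakly_complete (p : ℕ) [Fact p.Prime] (n N : ℕ) (hn : 1 ≤ n) (hN : 1 ≤ N)
    (s : ℕ) (x : Fin s → MvPowerSeries (Fin N) (WittVector p (GaloisField p n)))
    (hx : ∀ i, Overconvergent p n N (x i))
    (hxp : ∀ (i : Fin s) (J : Fin N →₀ ℕ),
      (p : WittVector p (GaloisField p n)) ∣ MvPowerSeries.coeff J (x i))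
    (c : (Fin s → ℕ) → WittVector p (GaloisField p n)) :
    ∃ g : MvPowerSeries (Fin N) (WittVector p (GaloisField p n)),
      (∀ (J : Fin N →₀ ℕ) (M : ℕ),
        (p : WittVector p (GaloisField p n)) ^ M ∣
          (MvPowerSeries.coeff J g -
            ∑ I ∈ (Fintype.piFinset fun _ : Fin s => Finset.range M).filter
                (fun I => ∑ j, I j < M),
              c I * MvPowerSeries.coeff J (∏ j, x j ^ I j))) ∧
      Overconvergent p n N g ∧
      (∀ g' : MvPowerSeries (Fin N) (WittVector p (GaloisField p n)),
        (∀ (J : Fin N →₀ ℕ) (M : ℕ),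
          (p : WittVector p (GaloisField p n)) ^ M ∣
            (MvPowerSeries.coeff J g' -
              ∑ I ∈ (Fintype.piFinset fun _ : Fin s => Finset.range M).filter
                  (fun I => ∑ j, I j < M),
                c I * MvPowerSeries.coeff J (∏ j, x j ^ I j))) → g' = g) := by
  classical
  choose m b hmb using hx
  set M' : ℕ := max 1 (Finset.univ.sup fun i => m i * (b i + 1)) with hM'def
  have hM'1 : 1 ≤ M' := by rw [hM'def]; exact le_max_left _ _
  have hM'i : ∀ i, m i * (b i + 1) ≤ M' := by
    intro i
    rw [hM'def]
    exact le_trans (Finset.le_sup (f := fun i => m i * (b i + 1)) (Finset.mem_univ i)) (le_max_right _ _)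
  set d : (Fin N →₀ ℕ) → ℕ := fun J => ((∑ i, J i) + M' - 1) / M' with hddef
  have hd0 : d 0 = 0 := by
    simp only [hddef, Finsupp.coe_zero, Pi.zero_apply, Finset.sum_const_zero, zero_add]
    exact Nat.div_eq_of_lt (by omega)
  have hdsub : ∀ J K : Fin N →₀ ℕ, d (J + K) ≤ d J + d K := by
    intro J K
    have hs : (∑ i, (J + K) i) = (∑ i, J i) + (∑ i, K i) := by
      simp [Finsupp.add_apply, Finset.sum_add_distrib]
    simpa only [hddef, hs] using ceil_subadd_s2 M' (∑ i, J i) (∑ i, K i) hM'1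
  -- divisibility of coefficients of x i
  have base : ∀ (i : Fin s) (J : Fin N →₀ ℕ),
      (p : WittVector p (GaloisField p n)) ^ (max 1 (d J)) ∣
        MvPowerSeries.coeff J (x i) := by
    intro i J
    have e1 := (hmb i).2 J
    have e2 : (p : WittVector p (GaloisField p n)) ^ 1 ∣
        MvPowerSeries.coeff J (x i) := by
      simpa using hxp i J
    have hle : d J ≤ max 1 (((∑ i, J i) + m i - 1) / m i - b i) :=
      ceil_le_max (m i) (b i) M' (∑ i, J i) (hmb i).1 (hM'i i)
    have hmax : (p : WittVector p (GaloisField p n)) ^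
        (max 1 (((∑ i, J i) + m i - 1) / m i - b i)) ∣
        MvPowerSeries.coeff J (x i) := by
      rcases max_choice 1 (((∑ i, J i) + m i - 1) / m i - b i) with h | h <;> rw [h]
      · exact e2
      · exact e1
    exact dvd_trans (pow_dvd_pow _ (max_le (le_max_left _ _) hle)) hmax
  -- multiplicativity of the divisibility bound
  have mulkey : ∀ (a b' : ℕ) (f h : MvPowerSeries (Fin N) (WittVector p (GaloisField p n))),
      (∀ J, (p : WittVector p (GaloisField p n)) ^ (max a (d J)) ∣ MvPowerSeries.coeff J f) →
      (∀ J, (p : WittVector p (GaloisField p n)) ^ (max b' (d J)) ∣ MvPowerSeries.coeff J h) →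
      ∀ J, (p : WittVector p (GaloisField p n)) ^ (max (a + b') (d J)) ∣
        MvPowerSeries.coeff J (f * h) := by
    intro a b' f h hf hh J
    rw [MvPowerSeries.coeff_mul]
    apply Finset.dvd_sum
    intro q hq
    rw [Finset.HasAntidiagonal.mem_antidiagonal] at hq
    have hd' : d J ≤ d q.1 + d q.2 := by rw [← hq]; exact hdsub q.1 q.2
    have hle : max (a + b') (d J) ≤ max a (d q.1) + max b' (d q.2) :=
      max_le (add_le_add (le_max_left _ _) (le_max_left _ _))
        (le_trans hd' (add_le_add (le_max_right _ _) (le_max_right _ _)))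
    calc (p : WittVector p (GaloisField p n)) ^ (max (a + b') (d J)) ∣
        (p : WittVector p (GaloisField p n)) ^ (max a (d q.1)) *
          (p : WittVector p (GaloisField p n)) ^ (max b' (d q.2)) := by
          rw [← pow_add]; exact pow_dvd_pow _ hle
      _ ∣ _ := mul_dvd_mul (hf q.1) (hh q.2)
  have onekey : ∀ J, (p : WittVector p (GaloisField p n)) ^ (max 0 (d J)) ∣
      MvPowerSeries.coeff J (1 : MvPowerSeries (Fin N) (WittVector p (GaloisField p n))) := by
    intro J
    rw [MvPowerSeries.coeff_one]
    split
    · next hJ => subst hJ; rw [max_eq_right (Nat.zero_le _), hd0, pow_zero]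
    · exact dvd_zero _
  have powkey : ∀ (i : Fin s) (e : ℕ) (J : Fin N →₀ ℕ),
      (p : WittVector p (GaloisField p n)) ^ (max e (d J)) ∣
        MvPowerSeries.coeff J (x i ^ e) := by
    intro i e
    induction e with
    | zero => intro J; rw [pow_zero]; exact onekey J
    | succ e ih =>
      intro J
      rw [pow_succ]
      exact mulkey e 1 _ _ ih (base i) J
  have prodkey : ∀ (I : Fin s → ℕ) (J : Fin N →₀ ℕ),
      (p : WittVector p (GaloisField p n)) ^ (max (∑ j, I j) (d J)) ∣
        MvPowerSeries.coeff J (∏ j, x j ^ I j) := by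
    intro I
    have key : ∀ t : Finset (Fin s), ∀ J,
        (p : WittVector p (GaloisField p n)) ^ (max (∑ j ∈ t, I j) (d J)) ∣
        MvPowerSeries.coeff J (∏ j ∈ t, x j ^ I j) := by
      intro t
      induction t using Finset.cons_induction with
      | empty => intro J; simpa using onekey J
      | cons j t hj ih =>
        intro J
        rw [Finset.prod_cons, Finset.sum_cons]
        exact mulkey (I j) (∑ j ∈ t, I j) _ _ (powkey j (I j)) ih J
    exact key Finset.univ
  -- the partial sums
  set S : (Fin N →₀ ℕ) → ℕ → WittVector p (GaloisField p n) := fun J M =>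
    ∑ I ∈ (Fintype.piFinset fun _ : Fin s => Finset.range M).filter
        (fun I => ∑ j, I j < M),
      c I * MvPowerSeries.coeff J (∏ j, x j ^ I j) with hSdef
  have Sdvd : ∀ J M, (p : WittVector p (GaloisField p n)) ^ (d J) ∣ S J M := by
    intro J M
    simp only [hSdef]
    apply Finset.dvd_sum
    intro I _
    exact ((dvd_trans (pow_dvd_pow _ (le_max_right _ _)) (prodkey I J)).mul_left (c I))
  have Smono : ∀ (J : Fin N →₀ ℕ) (M₁ M₂ : ℕ), M₁ ≤ M₂ →
      (p : WittVector p (GaloisField p n)) ^ M₁ ∣ S J M₂ - S J M₁ := by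
    intro J M₁ M₂ hM
    have hsub : (Fintype.piFinset fun _ : Fin s => Finset.range M₁).filter
        (fun I => ∑ j, I j < M₁) ⊆
        (Fintype.piFinset fun _ : Fin s => Finset.range M₂).filter
        (fun I => ∑ j, I j < M₂) := by
      intro I hI
      simp only [Finset.mem_filter, Fintype.mem_piFinset, Finset.mem_range] at hI ⊢
      exact ⟨fun j => lt_of_lt_of_le (hI.1 j) hM, lt_of_lt_of_le hI.2 hM⟩
    have hsdiff := Finset.sum_sdiff
      (f := fun I => c I * MvPowerSeries.coeff J (∏ j, x j ^ I j)) hsub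
    have heq : S J M₂ - S J M₁ =
        ∑ I ∈ ((Fintype.piFinset fun _ : Fin s => Finset.range M₂).filter
            (fun I => ∑ j, I j < M₂)) \
          ((Fintype.piFinset fun _ : Fin s => Finset.range M₁).filter
            (fun I => ∑ j, I j < M₁)),
          c I * MvPowerSeries.coeff J (∏ j, x j ^ I j) := by
      simp only [hSdef]
      rw [← hsdiff]
      ring
    rw [heq]
    apply Finset.dvd_sum
    intro I hI
    rw [Finset.mem_sdiff] at hI
    have hIge : M₁ ≤ ∑ j, I j := by
      by_contra hc
      push_neg at hc
      apply hI.2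
      simp only [Finset.mem_filter, Fintype.mem_piFinset, Finset.mem_range]
      exact ⟨fun j => lt_of_le_of_lt (Finset.single_le_sum
        (fun _ _ => Nat.zero_le _) (Finset.mem_univ j)) hc, hc⟩
    exact ((dvd_trans (pow_dvd_pow _ (le_trans hIge (le_max_left _ _)))
      (prodkey I J)).mul_left (c I))
  -- the limit
  set g : MvPowerSeries (Fin N) (WittVector p (GaloisField p n)) :=
    fun J => WittVector.mk p (fun i => (S J (i + 1)).coeff i) with hgdef
  have hgc : ∀ J, MvPowerSeries.coeff J g =
      WittVector.mk p (fun i => (S J (i + 1)).coeff i) := fun J => rfl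
  have approx : ∀ (J : Fin N →₀ ℕ) (M : ℕ),
      (p : WittVector p (GaloisField p n)) ^ M ∣ MvPowerSeries.coeff J g - S J M := by
    intro J M
    rw [witt_pow_dvd_sub_iff]
    intro i hi
    rw [hgc, WittVector.coeff_mk]
    have h1 := Smono J (i + 1) M hi
    exact ((witt_pow_dvd_sub_iff (i + 1) (S J M) (S J (i + 1))).mp h1 i (by omega)).symm
  refine ⟨g, fun J M => approx J M, ⟨M', 0, hM'1, fun J => ?_⟩, fun g' hg' => ?_⟩
  · rw [Nat.sub_zero]
    have hsplit : MvPowerSeries.coeff J g =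
        (MvPowerSeries.coeff J g - S J (d J)) + S J (d J) := by ring
    rw [hsplit]
    exact dvd_add (approx J (d J)) (Sdvd J (d J))
  · apply MvPowerSeries.ext
    intro J
    apply WittVector.ext
    intro i
    have h1 := hg' J (i + 1)
    have h2 := approx J (i + 1)
    have h3 : (p : WittVector p (GaloisField p n)) ^ (i + 1) ∣
        MvPowerSeries.coeff J g' - MvPowerSeries.coeff J g := by
      have h4 := dvd_sub h1 h2
      simpa only [hSdef, sub_sub_sub_cancel_right] using h4
    exact (witt_pow_dvd_sub_iff (i + 1) _ _).mp h3 i (by omega)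
end

section
/- The weak completion of W[t₁,…,t_N] equals the ring of overconvergent power series: W⟨t₁,…,t_N⟩† = O_N. That is, a power series f ∈ W⟦t₁,…,t_N⟧ lies in the smallest p-saturated, weakly complete subring containing all polynomials if and only if there exist integers m ≥ 1 and b ≥ 0 such that p^{max(0, ⌈|J|/m⌉ − b)} divides f_J for every multi-index J. -/
/-- `g` is the (necessarily unique) sum of the series `∑_I c_I x_1^{i_1} ⋯ x_s^{i_s}`:
each of its coefficients is approximated modulo every power `p^M` by the corresponding
coefficient of the finite partial sum over multi-indices `I` with `|I| < M`. -/
def IsSeriesSum (p : ℕ) [Fact p.Prime] (n N s : ℕ)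
    (x : Fin s → MvPowerSeries (Fin N) (WittVector p (GaloisField p n)))
    (c : (Fin s → ℕ) → WittVector p (GaloisField p n))
    (g : MvPowerSeries (Fin N) (WittVector p (GaloisField p n))) : Prop :=
  ∀ (J : Fin N →₀ ℕ) (M : ℕ),
    (p : WittVector p (GaloisField p n)) ^ M ∣
      (MvPowerSeries.coeff J g -
        ∑ I ∈ (Fintype.piFinset fun _ : Fin s => Finset.range M).filter
            (fun I => ∑ j, I j < M),
          c I * MvPowerSeries.coeff J (∏ j, x j ^ I j))

/-- A set `S` of power series is *weakly closed* if it contains all polynomials, is a subring,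
is `p`-saturated, and is closed under taking sums of series `∑_I c_I x_1^{i_1} ⋯ x_s^{i_s}`
with all `x_i ∈ S` having coefficients divisible by `p`. The weak completion
`W⟨t_1, …, t_N⟩†` is the smallest such set. -/
def IsWeaklyClosed (p : ℕ) [Fact p.Prime] (n N : ℕ)
    (S : Set (MvPowerSeries (Fin N) (WittVector p (GaloisField p n)))) : Prop :=
  (∀ P : MvPolynomial (Fin N) (WittVector p (GaloisField p n)),
    (P : MvPowerSeries (Fin N) (WittVector p (GaloisField p n))) ∈ S) ∧
  (0 : MvPowerSeries (Fin N) (WittVector p (GaloisField p n))) ∈ S ∧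
  (1 : MvPowerSeries (Fin N) (WittVector p (GaloisField p n))) ∈ S ∧
  (∀ f g, f ∈ S → g ∈ S → f + g ∈ S) ∧
  (∀ f, f ∈ S → -f ∈ S) ∧
  (∀ f g, f ∈ S → g ∈ S → f * g ∈ S) ∧
  (∀ f, (p : MvPowerSeries (Fin N) (WittVector p (GaloisField p n))) * f ∈ S → f ∈ S) ∧
  (∀ (s : ℕ) (x : Fin s → MvPowerSeries (Fin N) (WittVector p (GaloisField p n))),
    (∀ i, x i ∈ S) →
    (∀ (i : Fin s) (J : Fin N →₀ ℕ),
      (p : WittVector p (GaloisField p n)) ∣ MvPowerSeries.coeff J (x i)) →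
    ∀ (c : (Fin s → ℕ) → WittVector p (GaloisField p n)) (g),
      IsSeriesSum p n N s x c g → g ∈ S)


/-- ceiling division -/
def cdiv (a m : ℕ) : ℕ := (a + m - 1) / m

lemma cdiv_le_iff {m : ℕ} (hm : 1 ≤ m) {a k : ℕ} : cdiv a m ≤ k ↔ a ≤ k * m := by
  unfold cdiv
  rw [Nat.div_le_iff_le_mul_add_pred hm, mul_comm k m]
  obtain ⟨t, ht⟩ : ∃ t, m * k = t := ⟨_, rfl⟩
  rw [ht]
  omega

lemma lt_cdiv_iff {m : ℕ} (hm : 1 ≤ m) {a k : ℕ} : k < cdiv a m ↔ k * m < a := by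
  rw [← not_le, cdiv_le_iff hm, not_le]

lemma le_cdiv_mul {m : ℕ} (hm : 1 ≤ m) (a : ℕ) : a ≤ cdiv a m * m :=
  (cdiv_le_iff hm).mp le_rfl

lemma cdiv_mono {m : ℕ} (hm : 1 ≤ m) {a a' : ℕ} (h : a ≤ a') : cdiv a m ≤ cdiv a' m :=
  (cdiv_le_iff hm).mpr (h.trans (le_cdiv_mul hm a'))

lemma cdiv_add_le {m : ℕ} (hm : 1 ≤ m) (a b : ℕ) :
    cdiv (a + b) m ≤ cdiv a m + cdiv b m := by
  rw [cdiv_le_iff hm, add_mul]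
  exact Nat.add_le_add (le_cdiv_mul hm a) (le_cdiv_mul hm b)

lemma cdiv_anti {m m' : ℕ} (hm : 1 ≤ m) (h : m ≤ m') {a : ℕ} : cdiv a m' ≤ cdiv a m := by
  rw [cdiv_le_iff (hm.trans h)]
  exact (le_cdiv_mul hm a).trans (Nat.mul_le_mul_left _ h)

lemma cdiv_mul_self {m : ℕ} (hm : 1 ≤ m) (L : ℕ) : cdiv (m * L) m = L := by
  refine le_antisymm ((cdiv_le_iff hm).mpr (le_of_eq (mul_comm m L))) ?_
  cases L with
  | zero => exact Nat.zero_le _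
  | succ L' =>
    rw [Nat.succ_le_iff, lt_cdiv_iff hm, mul_comm L' m, Nat.mul_succ]
    exact Nat.lt_add_of_pos_right hm

lemma le_cdiv_of_mul_le {m L r : ℕ} (hm : 1 ≤ m) : L ≤ cdiv (m * L + r) m := by
  have h := cdiv_mono hm (Nat.le_add_right (m * L) r)
  rwa [cdiv_mul_self hm] at h

lemma cdiv_mul_le {m k a : ℕ} (hm : 1 ≤ m) (hk : 1 ≤ k) :
    cdiv a (m * k) ≤ cdiv (cdiv a m) k := by
  rw [cdiv_le_iff (by nlinarith)]
  calc a ≤ cdiv a m * m := le_cdiv_mul hm a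
    _ ≤ (cdiv (cdiv a m) k * k) * m := Nat.mul_le_mul_right _ (le_cdiv_mul hk _)
    _ = cdiv (cdiv a m) k * (m * k) := by ring

lemma cdiv_zero {m : ℕ} (hm : 1 ≤ m) : cdiv 0 m = 0 := by
  simpa using cdiv_mul_self hm 0


lemma cdiv_mul_le_self (C k : ℕ) : cdiv C k * k ≤ C + k - 1 := Nat.div_mul_le_self _ _


section PS
variable {R : Type*} [CommRing R] {N : ℕ} (ρ : R)

open MvPowerSeries

lemma weight_add (u v : Fin N →₀ ℕ) : (∑ i, (u + v) i) = (∑ i, u i) + (∑ i, v i) := by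
  simp [Finsupp.add_apply, Finset.sum_add_distrib]

lemma coeff_mul_bound {m b : ℕ} (hm : 1 ≤ m) {L L' : ℕ} {f g : MvPowerSeries (Fin N) R}
    (hf : ∀ J : Fin N →₀ ℕ, ρ ^ max L (cdiv (∑ i, J i) m - L * b) ∣ MvPowerSeries.coeff J f)
    (hg : ∀ J : Fin N →₀ ℕ, ρ ^ max L' (cdiv (∑ i, J i) m - L' * b) ∣ MvPowerSeries.coeff J g) :
    ∀ J : Fin N →₀ ℕ, ρ ^ max (L + L') (cdiv (∑ i, J i) m - (L + L') * b) ∣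
      MvPowerSeries.coeff J (f * g) := by
  intro J
  classical
  rw [MvPowerSeries.coeff_mul]
  refine Finset.dvd_sum fun uv huv => ?_
  replace huv := Finset.HasAntidiagonal.mem_antidiagonal.mp huv
  have hC : cdiv (∑ i, J i) m ≤ cdiv (∑ i, uv.1 i) m + cdiv (∑ i, uv.2 i) m := by
    rw [← huv, weight_add]
    exact cdiv_add_le hm _ _
  have hd : ρ ^ (max L (cdiv (∑ i, uv.1 i) m - L * b) +
      max L' (cdiv (∑ i, uv.2 i) m - L' * b)) ∣
      MvPowerSeries.coeff uv.1 f * MvPowerSeries.coeff uv.2 g := by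
    rw [pow_add]; exact mul_dvd_mul (hf _) (hg _)
  refine dvd_trans (pow_dvd_pow ρ ?_) hd
  have hb : (L + L') * b = L * b + L' * b := add_mul _ _ _
  obtain ⟨A, hA⟩ : ∃ A, L * b = A := ⟨_, rfl⟩
  obtain ⟨B, hB⟩ : ∃ B, L' * b = B := ⟨_, rfl⟩
  rw [hA, hB] at hb
  rw [hA, hB, hb]
  omega

lemma coeff_one_bound {m b : ℕ} (hm : 1 ≤ m) :
    ∀ J : Fin N →₀ ℕ, ρ ^ max 0 (cdiv (∑ i, J i) m - 0 * b) ∣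
      MvPowerSeries.coeff J (1 : MvPowerSeries (Fin N) R) := by
  intro J
  classical
  rw [MvPowerSeries.coeff_one]
  split_ifs with h
  · subst h
    simp [cdiv_zero hm]
  · exact dvd_zero _

lemma coeff_pow_bound {m b : ℕ} (hm : 1 ≤ m) {y : MvPowerSeries (Fin N) R}
    (hy : ∀ J : Fin N →₀ ℕ, ρ ^ max 1 (cdiv (∑ i, J i) m - 1 * b) ∣ MvPowerSeries.coeff J y)
    (k : ℕ) :
    ∀ J : Fin N →₀ ℕ, ρ ^ max k (cdiv (∑ i, J i) m - k * b) ∣ MvPowerSeries.coeff J (y ^ k) := by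
  induction k with
  | zero => simpa using coeff_one_bound ρ hm (b := b)
  | succ k ih =>
    intro J
    have := coeff_mul_bound ρ hm ih hy J
    rwa [pow_succ]

lemma coeff_prod_bound {m b : ℕ} (hm : 1 ≤ m) {s : ℕ}
    {x : Fin s → MvPowerSeries (Fin N) R}
    (hx : ∀ i, ∀ J : Fin N →₀ ℕ,
      ρ ^ max 1 (cdiv (∑ i, J i) m - 1 * b) ∣ MvPowerSeries.coeff J (x i))
    (I : Fin s → ℕ) (T : Finset (Fin s)) :
    ∀ J : Fin N →₀ ℕ, ρ ^ max (∑ i ∈ T, I i) (cdiv (∑ i, J i) m - (∑ i ∈ T, I i) * b) ∣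
      MvPowerSeries.coeff J (∏ i ∈ T, x i ^ I i) := by
  classical
  induction T using Finset.induction with
  | empty => simpa using coeff_one_bound ρ hm (b := b)
  | insert a T hnotmem ih =>
    intro J
    rw [Finset.prod_insert hnotmem, Finset.sum_insert hnotmem]
    have := coeff_mul_bound ρ hm (coeff_pow_bound ρ hm (hx a) (I a)) ih J
    rwa [add_comm (I a)] at this ⊢

section Fwd
variable (p : ℕ) [Fact p.Prime] (n N : ℕ)

local notation "W" => WittVector p (GaloisField p n)
local notation "pW" => (p : WittVector p (GaloisField p n))

/-- restatement of overconvergence via cdiv -/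
lemma overconvergent_iff (f : MvPowerSeries (Fin N) W) :
    Overconvergent p n N f ↔ ∃ m b : ℕ, 1 ≤ m ∧ ∀ J : Fin N →₀ ℕ,
      pW ^ (cdiv (∑ i, J i) m - b) ∣ MvPowerSeries.coeff J f := Iff.rfl

lemma ov_mono {m b m' b' : ℕ} (hm : 1 ≤ m) (hmm : m ≤ m') (hbb : b ≤ b')
    {f : MvPowerSeries (Fin N) W}
    (h : ∀ J : Fin N →₀ ℕ, pW ^ (cdiv (∑ i, J i) m - b) ∣ MvPowerSeries.coeff J f) :
    ∀ J : Fin N →₀ ℕ, pW ^ (cdiv (∑ i, J i) m' - b') ∣ MvPowerSeries.coeff J f := by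
  intro J
  refine dvd_trans (pow_dvd_pow _ ?_) (h J)
  have := cdiv_anti hm hmm (a := ∑ i, J i)
  omega

lemma ov_poly (P : MvPolynomial (Fin N) W) :
    Overconvergent p n N (P : MvPowerSeries (Fin N) W) := by
  refine ⟨1, P.totalDegree, le_rfl, fun J => ?_⟩
  rw [MvPolynomial.coeff_coe]
  by_cases h : MvPolynomial.coeff J P = 0
  · rw [h]; exact dvd_zero _
  · have hJ : (J.sum fun _ e => e) ≤ P.totalDegree :=
      MvPolynomial.le_totalDegree (MvPolynomial.mem_support_iff.mpr h)
    have hs : (∑ i, J i) = J.sum fun _ e => e :=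
      (Finsupp.sum_fintype J (fun _ e => e) fun _ => rfl).symm
    have h1 : ((∑ i, J i) + 1 - 1) / 1 = ∑ i, J i := by omega
    rw [h1]
    have : (∑ i, J i) - P.totalDegree = 0 := by omega
    rw [this, pow_zero]
    exact one_dvd _

lemma ov_zero : Overconvergent p n N (0 : MvPowerSeries (Fin N) W) :=
  ⟨1, 0, le_rfl, fun J => by rw [map_zero]; exact dvd_zero _⟩

lemma ov_one : Overconvergent p n N (1 : MvPowerSeries (Fin N) W) := by
  classical
  refine ⟨1, 0, le_rfl, fun J => ?_⟩
  rw [MvPowerSeries.coeff_one]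
  split_ifs with h
  · subst h
    simp
  · exact dvd_zero _

lemma ov_add {f g : MvPowerSeries (Fin N) W} (hf : Overconvergent p n N f)
    (hg : Overconvergent p n N g) : Overconvergent p n N (f + g) := by
  obtain ⟨m1, b1, hm1, h1⟩ := hf
  obtain ⟨m2, b2, hm2, h2⟩ := hg
  refine ⟨max m1 m2, max b1 b2, le_trans hm1 (le_max_left _ _), fun J => ?_⟩
  rw [map_add]
  exact dvd_add (ov_mono p n N hm1 (le_max_left _ _) (le_max_left _ _) h1 J)
    (ov_mono p n N hm2 (le_max_right _ _) (le_max_right _ _) h2 J)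

lemma ov_neg {f : MvPowerSeries (Fin N) W} (hf : Overconvergent p n N f) :
    Overconvergent p n N (-f) := by
  obtain ⟨m, b, hm, h⟩ := hf
  exact ⟨m, b, hm, fun J => by rw [map_neg]; exact (h J).neg_right⟩

lemma ov_mul {f g : MvPowerSeries (Fin N) W} (hf : Overconvergent p n N f)
    (hg : Overconvergent p n N g) : Overconvergent p n N (f * g) := by
  classical
  obtain ⟨m1, b1, hm1, h1⟩ := hf
  obtain ⟨m2, b2, hm2, h2⟩ := hg
  set m := max m1 m2 with hmdef
  have hm : 1 ≤ m := le_trans hm1 (le_max_left _ _)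
  have h1' := ov_mono p n N hm1 (le_max_left m1 m2) le_rfl h1
  have h2' := ov_mono p n N hm2 (le_max_right m1 m2) le_rfl h2
  refine ⟨m, b1 + b2, hm, fun J => ?_⟩
  show pW ^ (cdiv (∑ i, J i) m - (b1 + b2)) ∣ _
  rw [MvPowerSeries.coeff_mul]
  refine Finset.dvd_sum fun uv huv => ?_
  replace huv := Finset.HasAntidiagonal.mem_antidiagonal.mp huv
  have hC : cdiv (∑ i, J i) m ≤ cdiv (∑ i, uv.1 i) m + cdiv (∑ i, uv.2 i) m := by
    rw [← huv]
    have : (∑ i, (uv.1 + uv.2) i) = (∑ i, uv.1 i) + (∑ i, uv.2 i) := by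
      simp [Finsupp.add_apply, Finset.sum_add_distrib]
    rw [this]
    exact cdiv_add_le hm _ _
  have hd : pW ^ ((cdiv (∑ i, uv.1 i) m - b1) + (cdiv (∑ i, uv.2 i) m - b2)) ∣
      MvPowerSeries.coeff uv.1 f * MvPowerSeries.coeff uv.2 g := by
    rw [pow_add]; exact mul_dvd_mul (h1' uv.1) (h2' uv.2)
  exact dvd_trans (pow_dvd_pow _ (by omega)) hd

lemma ov_sat {f : MvPowerSeries (Fin N) W}
    (hf : Overconvergent p n N ((p : MvPowerSeries (Fin N) W) * f)) :
    Overconvergent p n N f := by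
  obtain ⟨m, b, hm, h⟩ := hf
  refine ⟨m, b + 1, hm, fun J => ?_⟩
  show pW ^ (cdiv (∑ i, J i) m - (b + 1)) ∣ _
  have hcast : (p : MvPowerSeries (Fin N) W) = MvPowerSeries.C pW :=
    (map_natCast (MvPowerSeries.C) p).symm
  have h0' := h J
  rw [hcast, MvPowerSeries.coeff_C_mul] at h0'
  have h' : pW ^ (cdiv (∑ i, J i) m - b) ∣ pW * MvPowerSeries.coeff J f := h0'
  set e := cdiv (∑ i, J i) m - b with he
  by_cases h0 : cdiv (∑ i, J i) m - (b + 1) = 0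
  · rw [h0, pow_zero]; exact one_dvd _
  · have hee : e = (cdiv (∑ i, J i) m - (b + 1)) + 1 := by omega
    obtain ⟨k, hk⟩ := h'
    rw [hee, pow_succ'] at hk
    have hp0 : pW ≠ 0 := WittVector.p_nonzero p (GaloisField p n)
    have : MvPowerSeries.coeff J f = pW ^ (cdiv (∑ i, J i) m - (b + 1)) * k :=
      mul_left_cancel₀ hp0 (by rw [hk]; ring)
    exact ⟨k, this⟩

lemma ov_series {s : ℕ} {x : Fin s → MvPowerSeries (Fin N) W}
    (hxo : ∀ i, Overconvergent p n N (x i))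
    (hxp : ∀ (i : Fin s) (J : Fin N →₀ ℕ), pW ∣ MvPowerSeries.coeff J (x i))
    (c : (Fin s → ℕ) → W) (g : MvPowerSeries (Fin N) W)
    (hg : IsSeriesSum p n N s x c g) : Overconvergent p n N g := by
  classical
  choose mi bi hmi hdi using hxo
  set m := max 1 (Finset.univ.sup mi) with hmdef
  set b := Finset.univ.sup bi with hbdef
  have hm : 1 ≤ m := le_max_left _ _
  have hx' : ∀ i, ∀ J : Fin N →₀ ℕ,
      pW ^ max 1 (cdiv (∑ i, J i) m - 1 * b) ∣ MvPowerSeries.coeff J (x i) := by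
    intro i J
    rw [one_mul]
    rcases max_choice 1 (cdiv (∑ i, J i) m - b) with hc | hc <;> rw [hc]
    · rw [pow_one]; exact hxp i J
    · exact ov_mono p n N (hmi i)
        (le_trans (Finset.le_sup (Finset.mem_univ i)) (le_max_right _ _))
        (Finset.le_sup (Finset.mem_univ i)) (hdi i) J
  refine ⟨m * (b + 1), 0, by nlinarith, fun J => ?_⟩
  show pW ^ (cdiv (∑ i, J i) (m * (b + 1)) - 0) ∣ _
  have key : pW ^ (cdiv (cdiv (∑ i, J i) m) (b + 1)) ∣ MvPowerSeries.coeff J g := by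
    have hsum : pW ^ (cdiv (cdiv (∑ i, J i) m) (b + 1)) ∣
        ∑ I ∈ (Fintype.piFinset fun _ : Fin s =>
            Finset.range (cdiv (cdiv (∑ i, J i) m) (b + 1))).filter
          (fun I => ∑ j, I j < cdiv (cdiv (∑ i, J i) m) (b + 1)),
          c I * MvPowerSeries.coeff J (∏ j, x j ^ I j) := by
      refine Finset.dvd_sum fun I hI => ?_
      have hI2 : (∑ j, I j) < cdiv (cdiv (∑ i, J i) m) (b + 1) :=
        (Finset.mem_filter.mp hI).2
      have hco := coeff_prod_bound pW hm hx' I Finset.univ J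
      refine Dvd.dvd.mul_left (dvd_trans (pow_dvd_pow _ ?_) hco) (c I)
      obtain ⟨C, hC⟩ : ∃ C, cdiv (∑ i, J i) m = C := ⟨_, rfl⟩
      rw [hC] at hI2 ⊢
      have hEb := cdiv_mul_le_self C (b + 1)
      obtain ⟨E, hE⟩ : ∃ E, cdiv C (b + 1) = E := ⟨_, rfl⟩
      rw [hE] at hI2
      rw [hE, mul_add, mul_one] at hEb
      have hE1 : 1 ≤ E := by omega
      obtain ⟨L, hL⟩ : ∃ L, (∑ j : Fin s, I j) = L := ⟨_, rfl⟩
      rw [hL] at hI2 ⊢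
      have h2 : L * b ≤ (E - 1) * b := Nat.mul_le_mul_right _ (by omega)
      have h3 : (E - 1) * b = E * b - b := by rw [Nat.sub_mul, one_mul]
      rw [h3] at h2
      have h5 : b ≤ E * b := Nat.le_mul_of_pos_left b (by omega)
      obtain ⟨A, hA⟩ : ∃ A, L * b = A := ⟨_, rfl⟩
      obtain ⟨B, hB⟩ : ∃ B, E * b = B := ⟨_, rfl⟩
      rw [hA] at h2 ⊢
      rw [hB] at h2 h5 hEb
      omega
    have := dvd_add (hg J (cdiv (cdiv (∑ i, J i) m) (b + 1))) hsum
    simpa using this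
  refine dvd_trans (pow_dvd_pow _ ?_) key
  have h := cdiv_mul_le (a := ∑ i, J i) hm (by omega : 1 ≤ b + 1)
  omega

end Fwd

section Bwd
variable (p : ℕ) [Fact p.Prime] (n N : ℕ)

local notation "W" => WittVector p (GaloisField p n)
local notation "pW" => (p : WittVector p (GaloisField p n))

/-- product of monomials -/
lemma monomial_prod {ι : Type} (T : Finset ι) (d : ι → (Fin N →₀ ℕ)) (a : ι → W) :
    (∏ i ∈ T, MvPowerSeries.monomial (d i) (a i)) =
      MvPowerSeries.monomial (∑ i ∈ T, d i) (∏ i ∈ T, a i) := by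
  classical
  induction T using Finset.induction with
  | empty => simp [MvPowerSeries.monomial_zero_one]
  | insert i T hnotmem ih =>
    rw [Finset.prod_insert hnotmem, Finset.prod_insert hnotmem, Finset.sum_insert hnotmem, ih,
      MvPowerSeries.monomial_mul_monomial]

theorem mem_of_overconvergent {f : MvPowerSeries (Fin N) W}
    (hf : Overconvergent p n N f) {S : Set (MvPowerSeries (Fin N) W)}
    (hS : IsWeaklyClosed p n N S) : f ∈ S := by
  classical
  obtain ⟨hpoly, h0S, h1S, hadd, hneg, hmul, hsat, hser⟩ := hS
  obtain ⟨m, b, hm, hd⟩ := hf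
  have hd' : ∀ J : Fin N →₀ ℕ, pW ^ (cdiv (∑ i, J i) m - b) ∣ MvPowerSeries.coeff J f := hd
  -- the series F = p^b f whose coefficients obey the cleaner bound
  set F : MvPowerSeries (Fin N) W := (p : MvPowerSeries (Fin N) W) ^ b * f with hFdef
  have hcast : ((p : MvPowerSeries (Fin N) W) ^ b) = MvPowerSeries.C (pW ^ b) := by
    rw [map_pow, map_natCast]
  have hFc : ∀ J : Fin N →₀ ℕ,
      MvPowerSeries.coeff J F = pW ^ b * MvPowerSeries.coeff J f := by
    intro J
    rw [hFdef, hcast, MvPowerSeries.coeff_C_mul]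
  have hFd : ∀ J : Fin N →₀ ℕ, pW ^ (cdiv (∑ i, J i) m) ∣ MvPowerSeries.coeff J F := by
    intro J
    rw [hFc]
    refine dvd_trans (pow_dvd_pow _ (by omega : cdiv (∑ i, J i) m ≤ b + (cdiv (∑ i, J i) m - b)))
      ?_
    rw [pow_add]
    exact mul_dvd_mul_left _ (hd' J)
  -- the monomial series x j = p * t_j^m
  set x : Fin N → MvPowerSeries (Fin N) W :=
    fun j => MvPowerSeries.monomial (Finsupp.single j m) pW with hxdef
  have hxS : ∀ j, x j ∈ S := by
    intro j
    have := hpoly (MvPolynomial.monomial (Finsupp.single j m) pW)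
    rwa [MvPolynomial.coe_monomial] at this
  have hxp : ∀ (j : Fin N) (J : Fin N →₀ ℕ), pW ∣ MvPowerSeries.coeff J (x j) := by
    intro j J
    rw [hxdef, MvPowerSeries.coeff_monomial]
    split_ifs
    · rfl
    · exact dvd_zero _
  -- multi-index scaling
  set D : (Fin N → ℕ) → (Fin N →₀ ℕ) :=
    fun I => Finsupp.equivFunOnFinite.symm (fun j => m * I j) with hDdef
  have hDapp : ∀ (I : Fin N → ℕ) (i : Fin N), D I i = m * I i := fun I i => rfl
  have hprod : ∀ I : Fin N → ℕ,
      (∏ j, x j ^ I j) = MvPowerSeries.monomial (D I) (pW ^ (∑ j, I j)) := by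
    have hpow : ∀ (j : Fin N) (k : ℕ),
        (x j) ^ k = MvPowerSeries.monomial (Finsupp.single j (m * k)) (pW ^ k) := by
      intro j k
      induction k with
      | zero => rw [pow_zero, Nat.mul_zero, Finsupp.single_zero, pow_zero,
          MvPowerSeries.monomial_zero_one]
      | succ k ih =>
        rw [pow_succ, ih, hxdef, MvPowerSeries.monomial_mul_monomial, ← Finsupp.single_add,
          ← pow_succ]
        congr 2
    intro I
    have hsum_single : (∑ j, Finsupp.single j (m * I j)) = D I := by
      ext i
      rw [Finsupp.finset_sum_apply, hDapp]
      simp [Finsupp.single_apply]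
    have hprodpow : (∏ j : Fin N, pW ^ I j) = pW ^ (∑ j, I j) :=
      Finset.prod_pow_eq_pow_sum _ _ _
    rw [Finset.prod_congr rfl fun j _ => hpow j (I j), monomial_prod, hsum_single, hprodpow]
  -- weight of D I + R
  have hwD : ∀ (I : Fin N → ℕ) (R : Fin N →₀ ℕ),
      (∑ i, (D I + R) i) = m * (∑ j, I j) + (∑ i, R i) := by
    intro I R
    rw [show (∑ i, (D I + R) i) = (∑ i, D I i) + (∑ i, R i) by
      simp [Finsupp.add_apply, Finset.sum_add_distrib]]
    congr 1
    rw [Finset.mul_sum]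
    exact Finset.sum_congr rfl fun i _ => hDapp I i
  -- coefficients c for each residue R
  have cdvd : ∀ (R : Fin N →₀ ℕ) (I : Fin N → ℕ),
      pW ^ (∑ j, I j) ∣ MvPowerSeries.coeff (D I + R) F := by
    intro R I
    refine dvd_trans (pow_dvd_pow _ ?_) (hFd (D I + R))
    rw [hwD]
    exact le_cdiv_of_mul_le hm
  -- the series g_R for each residue R
  set g : (Fin N →₀ ℕ) → MvPowerSeries (Fin N) W := fun R K =>
    if ∀ j, m ∣ K j then MvPowerSeries.coeff (K + R) F else 0 with hgdef
  have hgc : ∀ (R K : Fin N →₀ ℕ), MvPowerSeries.coeff K (g R) =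
      if ∀ j, m ∣ K j then MvPowerSeries.coeff (K + R) F else 0 := fun R K => rfl
  -- each g_R is a series sum, hence in S
  have hgS : ∀ R : Fin N →₀ ℕ, g R ∈ S := by
    intro R
    refine hser N x hxS hxp (fun I => (cdvd R I).choose) (g R) ?_
    intro J M
    have hspec : ∀ I : Fin N → ℕ,
        MvPowerSeries.coeff (D I + R) F = pW ^ (∑ j, I j) * (cdvd R I).choose :=
      fun I => (cdvd R I).choose_spec
    have hcoeffprod : ∀ I : Fin N → ℕ, MvPowerSeries.coeff J (∏ j, x j ^ I j) =
        if J = D I then pW ^ (∑ j, I j) else 0 := by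
      intro I
      rw [hprod I, MvPowerSeries.coeff_monomial]
    by_cases hJm : ∀ j, m ∣ J j
    · -- J is componentwise divisible by m
      set Q : Fin N → ℕ := fun j => J j / m with hQdef
      have hDQ : D Q = J := by
        ext i
        rw [hDapp]
        exact Nat.mul_div_cancel' (hJm i)
      have hDinj : ∀ I : Fin N → ℕ, J = D I → I = Q := by
        intro I hI
        funext j
        have h1 : m * I j = m * Q j := by
          rw [← hDapp I j, ← hDapp Q j, ← hI, hDQ]
        exact Nat.eq_of_mul_eq_mul_left (by omega) h1
      by_cases hQM : (∑ j, Q j) < M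
      · have hmem : Q ∈ (Fintype.piFinset fun _ : Fin N => Finset.range M).filter
            (fun I => ∑ j, I j < M) := by
          refine Finset.mem_filter.mpr ⟨Fintype.mem_piFinset.mpr fun j => ?_, hQM⟩
          refine Finset.mem_range.mpr (lt_of_le_of_lt ?_ hQM)
          exact Finset.single_le_sum (fun i _ => Nat.zero_le _) (Finset.mem_univ j)
        rw [Finset.sum_eq_single_of_mem Q hmem]
        · rw [hgc, if_pos hJm, hcoeffprod, if_pos hDQ.symm, ← hDQ, hspec Q]
          have h0 : pW ^ (∑ j, Q j) * (cdvd R Q).choose -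
              (cdvd R Q).choose * pW ^ (∑ j, Q j) = 0 := by ring
          rw [h0]
          exact dvd_zero _
        · intro I hI hIQ
          rw [hcoeffprod, if_neg fun hcon => hIQ (hDinj I hcon), mul_zero]
      · rw [Finset.sum_eq_zero, hgc, if_pos hJm, sub_zero]
        · refine dvd_trans (pow_dvd_pow _ ?_) (hFd (J + R))
          have h1 : (∑ i, (J + R) i) = m * (∑ j, Q j) + (∑ i, R i) := by
            rw [← hDQ]
            exact hwD Q R
          rw [h1]
          exact le_trans (by omega : M ≤ ∑ j, Q j) (le_cdiv_of_mul_le hm)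
        · intro I hI
          rw [hcoeffprod, if_neg, mul_zero]
          intro hcon
          have hlt := (Finset.mem_filter.mp hI).2
          rw [hDinj I hcon] at hlt
          exact hQM hlt
    · rw [Finset.sum_eq_zero, hgc, if_neg hJm, sub_zero]
      · exact dvd_zero _
      · intro I hI
        rw [hcoeffprod, if_neg, mul_zero]
        intro hcon
        exact hJm fun j => by rw [hcon]; exact Dvd.intro (I j) (hDapp I j).symm
  -- decomposition of F by residue classes
  have hFsum : F = ∑ r ∈ Fintype.piFinset (fun _ : Fin N => Finset.range m),
      MvPowerSeries.monomial (Finsupp.equivFunOnFinite.symm r) 1 *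
        g (Finsupp.equivFunOnFinite.symm r) := by
    apply MvPowerSeries.ext
    intro J
    rw [map_sum]
    have hterm : ∀ r ∈ Fintype.piFinset (fun _ : Fin N => Finset.range m),
        MvPowerSeries.coeff J (MvPowerSeries.monomial (Finsupp.equivFunOnFinite.symm r) 1 *
          g (Finsupp.equivFunOnFinite.symm r)) =
        if ∀ j, J j % m = r j then MvPowerSeries.coeff J F else 0 := by
      intro r hr
      have hrm : ∀ j, r j < m := fun j => Finset.mem_range.mp (Fintype.mem_piFinset.mp hr j)
      set R := Finsupp.equivFunOnFinite.symm r with hRdef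
      have hRapp : ∀ j, R j = r j := fun j => rfl
      rw [MvPowerSeries.coeff_monomial_mul]
      by_cases hc : ∀ j, J j % m = r j
      · have hle : R ≤ J := by
          rw [Finsupp.le_def]
          intro i
          rw [hRapp, ← hc i]
          exact Nat.mod_le _ _
        rw [if_pos hle, one_mul, if_pos hc, hgc, if_pos, tsub_add_cancel_of_le hle]
        intro j
        rw [Finsupp.tsub_apply, hRapp, ← hc j]
        exact Nat.dvd_sub_mod _
      · rw [if_neg hc]
        by_cases hle : R ≤ J
        · rw [if_pos hle, one_mul, hgc, if_neg]
          intro hdvd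
          refine hc fun j => ?_
          obtain ⟨k, hk⟩ := hdvd j
          rw [Finsupp.tsub_apply, hRapp] at hk
          have hrj : r j ≤ J j := by
            rw [Finsupp.le_def] at hle
            have h5 := hle j
            rwa [hRapp] at h5
          have h6 : J j = m * k + r j := by omega
          rw [h6, Nat.mul_add_mod, Nat.mod_eq_of_lt (hrm j)]
        · rw [if_neg hle]
    rw [Finset.sum_congr rfl hterm]
    have hr0 : (fun j => J j % m) ∈ Fintype.piFinset (fun _ : Fin N => Finset.range m) :=
      Fintype.mem_piFinset.mpr fun j => Finset.mem_range.mpr (Nat.mod_lt _ (by omega))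
    rw [Finset.sum_eq_single_of_mem _ hr0]
    · rw [if_pos fun j => rfl]
    · intro r hr hne
      rw [if_neg]
      intro hcon
      exact hne (funext fun j => (hcon j).symm)
  have hmonoS : ∀ R : Fin N →₀ ℕ,
      (MvPowerSeries.monomial R 1 : MvPowerSeries (Fin N) W) ∈ S := by
    intro R
    have := hpoly (MvPolynomial.monomial R 1)
    rwa [MvPolynomial.coe_monomial] at this
  have hFS : F ∈ S := by
    rw [hFsum]
    exact Finset.sum_induction _ (· ∈ S) hadd h0S fun r _ => hmul _ _ (hmonoS _) (hgS _)
  have hsatpow : ∀ (k : ℕ) (h : MvPowerSeries (Fin N) W),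
      (p : MvPowerSeries (Fin N) W) ^ k * h ∈ S → h ∈ S := by
    intro k
    induction k with
    | zero => intro h hh; rwa [pow_zero, one_mul] at hh
    | succ k ih =>
      intro h hh
      rw [pow_succ, mul_assoc] at hh
      exact hsat h (ih _ hh)
  exact hsatpow b f hFS

end Bwd


/-- The weak completion of `W[t_1, …, t_N]` equals the ring of overconvergent power series:
`f` belongs to every weakly closed subset of `W⟦t_1, …, t_N⟧` (i.e. to the smallest
`p`-saturated weakly complete subring containing the polynomials) if and only if `f` is
overconvergent. -/
theorem weak_completion_eq_overconvergent (p : ℕ) [Fact p.Prime] (n N : ℕ)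
    (hn : 1 ≤ n) (hN : 1 ≤ N)
    (f : MvPowerSeries (Fin N) (WittVector p (GaloisField p n))) :
    (∀ S : Set (MvPowerSeries (Fin N) (WittVector p (GaloisField p n))),
      IsWeaklyClosed p n N S → f ∈ S) ↔ Overconvergent p n N f := by
  constructor
  · intro h
    refine h {f | Overconvergent p n N f} ⟨fun P => ov_poly p n N P, ov_zero p n N,
      ov_one p n N, fun f g hf hg => ov_add p n N hf hg, fun f hf => ov_neg p n N hf,
      fun f g hf hg => ov_mul p n N hf hg, fun f hf => ov_sat p n N hf,
      fun s x hxo hxp c g hg => ov_series p n N hxo hxp c g hg⟩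
  · intro hf S hS
    exact mem_of_overconvergent p n N hf hS
end PS
end

section
/- The module of Kähler differentials Ω¹_{R/K} is a free R-module of rank 1 with basis {D x}; that is, the R-linear map R → Ω¹_{R/K} sending f to f • D x is bijective. (In particular, D y = (P'(x)/(2y)) • D x, where P' is the derivative of P.) -/
set_option synthInstance.maxHeartbeats 1000000
set_option maxHeartbeats 1000000

noncomputable section

/-- The coordinate ring `A₀ = K[x,y]/(y² - P(x))` of the affine hyperelliptic curve,
with `x = X 0` and `y = X 1`. -/
abbrev HypAff (K : Type) [Field K] (P : Polynomial K) : Type :=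
  MvPolynomial (Fin 2) K ⧸
    Ideal.span {(MvPolynomial.X 1 : MvPolynomial (Fin 2) K) ^ 2 -
      Polynomial.aeval (MvPolynomial.X 0) P}

/-- The image of `y` in `A₀`. -/
def yA (K : Type) [Field K] (P : Polynomial K) : HypAff K P :=
  Ideal.Quotient.mk _ (MvPolynomial.X 1)

/-- `R`, the localization of `A₀` away from `y`. -/
abbrev HypRing (K : Type) [Field K] (P : Polynomial K) : Type :=
  Localization.Away (yA K P)

/-- The image of `x` in `R`. -/
def xR (K : Type) [Field K] (P : Polynomial K) : HypRing K P :=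
  algebraMap (HypAff K P) (HypRing K P) (Ideal.Quotient.mk _ (MvPolynomial.X 0))

/-- The image of `y` in `R`, as a unit. -/
def yU (K : Type) [Field K] (P : Polynomial K) : (HypRing K P)ˣ :=
  (IsLocalization.Away.algebraMap_isUnit (S := HypRing K P) (yA K P)).unit

/-- `y^s` for `s ∈ ℤ`: the `s`-th power of the unit `y` in `R`. -/
def ypow (K : Type) [Field K] (P : Polynomial K) (s : ℤ) : HypRing K P :=
  ((yU K P ^ s : (HypRing K P)ˣ) : HypRing K P)

instance (K : Type) [Field K] (P : Polynomial K) :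
    Module (HypRing K P) (Ω[HypRing K P⁄K]) :=
  instModuleKaehlerDifferentialOfSMulCommClass (R := K) (S := HypRing K P) (R' := HypRing K P)

instance (K : Type) [Field K] (P : Polynomial K) :
    Module K (Ω[HypRing K P⁄K]) :=
  instModuleKaehlerDifferentialOfSMulCommClass (R := K) (S := HypRing K P) (R' := K)

/-- The universal derivation `D : R → Ω¹_{R/K}`. -/
def DR (K : Type) [Field K] (P : Polynomial K) :
    Derivation K (HypRing K P) (Ω[HypRing K P⁄K]) :=
  KaehlerDifferential.D K (HypRing K P)

section Aux
open TrivSqZeroExt Polynomial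

variable {K : Type} [Field K] [CharZero K] (P : Polynomial K)

/-- square-zero binomial -/
lemma pow_add_sq_zero {B : Type} [CommRing B] (a b : B) (hb : b * b = 0) (n : ℕ) :
    (a + b) ^ n = a ^ n + n * a ^ (n - 1) * b := by
  induction n with
  | zero => simp
  | succ n ih =>
    rcases Nat.eq_zero_or_pos n with rfl | hn
    · simp
    · have h1 : a ^ (n - 1) * a = a ^ n := by
        rw [← pow_succ, Nat.sub_add_cancel hn]
      rw [pow_succ, ih, Nat.succ_sub_one]
      push_cast
      linear_combination ((n : B) * b) * h1 + ((n : B) * a ^ (n - 1)) * hb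

omit [CharZero K] in
lemma taylor_sq_zero {B : Type} [CommRing B] [Algebra K B] (a b : B) (hb : b * b = 0)
    (q : Polynomial K) :
    Polynomial.aeval (a + b) q =
      Polynomial.aeval a q + Polynomial.aeval a (derivative q) * b := by
  induction q using Polynomial.induction_on' with
  | add p q hp hq =>
    rw [map_add, map_add, hp, hq, map_add, map_add]
    ring
  | monomial n c =>
    rw [Polynomial.aeval_monomial, Polynomial.derivative_monomial, Polynomial.aeval_monomial,
      Polynomial.aeval_monomial, pow_add_sq_zero a b hb n, map_mul, map_natCast]
    ring

/-- a derivation applied to `aeval` of a single-variable polynomial -/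
lemma deriv_aeval_poly {R : Type} [CommRing R] [Algebra K R] {M : Type} [AddCommGroup M]
    [Module K M] [Module R M] [IsScalarTower K R M] (d : Derivation K R M) (r : R)
    (q : Polynomial K) :
    d (Polynomial.aeval r q) = (Polynomial.aeval r (derivative q)) • d r := by
  induction q using Polynomial.induction_on' with
  | add p q hp hq => simp only [map_add, hp, hq, add_smul]
  | monomial n c =>
    rw [Polynomial.aeval_monomial, Polynomial.derivative_monomial, Polynomial.aeval_monomial,
      Derivation.leibniz, Derivation.map_algebraMap, Derivation.leibniz_pow, smul_zero, add_zero,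
      map_mul, map_natCast]
    rw [← Nat.cast_smul_eq_nsmul R n, smul_smul, smul_smul]
end Aux
set_option linter.unusedSectionVars false

namespace HypProofAux
open TrivSqZeroExt Polynomial

/-- two is a unit in any algebra over a char-zero field -/
lemma isUnit_two' (K T : Type) [Field K] [CharZero K] [CommRing T] [Algebra K T] :
    IsUnit (2 : T) := by
  have h : IsUnit ((2 : K)) := isUnit_iff_ne_zero.mpr two_ne_zero
  have := h.map (algebraMap K T)
  rwa [map_ofNat] at this

variable (K : Type) [Field K] [CharZero K] (P : Polynomial K)

/-- the defining polynomial -/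
def FF : MvPolynomial (Fin 2) K :=
  (MvPolynomial.X 1 : MvPolynomial (Fin 2) K) ^ 2 - Polynomial.aeval (MvPolynomial.X 0) P

/-- image of x in A₀ -/
def xA : HypAff K P := Ideal.Quotient.mk _ (MvPolynomial.X 0)

lemma curve_rel_A : (yA K P) ^ 2 = Polynomial.aeval (xA K P) P := by
  have h0 : Ideal.Quotient.mk
      (Ideal.span {(MvPolynomial.X 1 : MvPolynomial (Fin 2) K) ^ 2 -
        Polynomial.aeval (MvPolynomial.X 0) P}) ((MvPolynomial.X 1) ^ 2 -
        Polynomial.aeval (MvPolynomial.X 0) P) = 0 :=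
    Ideal.Quotient.eq_zero_iff_mem.mpr (Ideal.subset_span (Set.mem_singleton _))
  rw [map_sub, sub_eq_zero, map_pow] at h0
  rw [yA, xA, h0]
  exact (Polynomial.aeval_algHom_apply (Ideal.Quotient.mkₐ K _) (MvPolynomial.X 0 : MvPolynomial (Fin 2) K) P).symm

end HypProofAux
namespace HypProofAux
section Generic
open TrivSqZeroExt Polynomial

variable (K : Type) [Field K] [CharZero K] (P : Polynomial K)
variable (T : Type) [CommRing T] [Algebra K T] [Algebra (HypAff K P) T]
  [IsScalarTower K (HypAff K P) T] [IsLocalization.Away (yA K P) T]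

/-- image of x in T -/
def xT : T := algebraMap (HypAff K P) T (xA K P)
/-- image of y in T -/
def yT : T := algebraMap (HypAff K P) T (yA K P)

lemma yT_isUnit : IsUnit (yT K P T) :=
  IsLocalization.Away.algebraMap_isUnit (S := T) (yA K P)

lemma curve_rel_T : (yT K P T) ^ 2 = Polynomial.aeval (xT K P T) P := by
  have := congrArg (algebraMap (HypAff K P) T) (curve_rel_A K P)
  rw [map_pow] at this
  rw [yT, this, xT]
  exact (Polynomial.aeval_algHom_apply (IsScalarTower.toAlgHom K (HypAff K P) T)
    (xA K P) P).symm

/-- the value of the extended derivation at y -/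
def wT : T :=
  Ring.inverse (2 * yT K P T) * Polynomial.aeval (xT K P T) (derivative P)

lemma two_yT_isUnit : IsUnit (2 * yT K P T) :=
  (isUnit_two' K T).mul (yT_isUnit K P T)

lemma wT_spec : 2 * yT K P T * wT K P T = Polynomial.aeval (xT K P T) (derivative P) := by
  rw [wT, ← mul_assoc, Ring.mul_inverse_cancel _ (two_yT_isUnit K P T), one_mul]

/-- the assignment of the variables in the dual numbers -/
def gT : Fin 2 → TrivSqZeroExt T T := fun i =>
  if i = 0 then inl (xT K P T) + inr 1 else inl (yT K P T) + inr (wT K P T)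

/-- the lifted map on the polynomial ring -/
def PhiT : MvPolynomial (Fin 2) K →ₐ[K] TrivSqZeroExt T T := MvPolynomial.aeval (gT K P T)

lemma aeval_inl (r : T) (q : Polynomial K) :
    Polynomial.aeval (inl r : TrivSqZeroExt T T) q = inl (Polynomial.aeval r q) := by
  simpa using Polynomial.aeval_algHom_apply (inlAlgHom K T T) r q

lemma sq_expand (a m : T) :
    (inl a + inr m : TrivSqZeroExt T T) ^ 2 = inl (a ^ 2) + inr (2 * (a * m)) := by
  rw [sq, add_mul, mul_add, mul_add, inl_mul_inl, inl_mul_inr, inr_mul_inl, inr_mul_inr]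
  ext
  · simp [sq]
  · simp [op_smul_eq_smul, smul_eq_mul]
    ring

lemma PhiT_X0 : PhiT K P T (MvPolynomial.X 0) = inl (xT K P T) + inr 1 := by
  rw [PhiT, MvPolynomial.aeval_X]; rfl

lemma PhiT_X1 : PhiT K P T (MvPolynomial.X 1) = inl (yT K P T) + inr (wT K P T) := by
  rw [PhiT, MvPolynomial.aeval_X]; rfl

lemma PhiT_F : PhiT K P T (FF K P) = 0 := by
  rw [FF, map_sub, map_pow, PhiT_X1, ← Polynomial.aeval_algHom_apply, PhiT_X0,
    taylor_sq_zero _ _ (inr_mul_inr _ (1 : T) 1) P, sq_expand, aeval_inl, aeval_inl,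
    inl_mul_inr, smul_eq_mul, mul_one, curve_rel_T]
  rw [show 2 * (yT K P T * wT K P T) = Polynomial.aeval (xT K P T) (derivative P) by
    rw [← wT_spec K P T]; ring]
  abel

/-- the lifted map on the affine coordinate ring -/
def PhiA : HypAff K P →ₐ[K] TrivSqZeroExt T T :=
  Ideal.Quotient.liftₐ _ (PhiT K P T) (by
    intro a ha
    have hle : Ideal.span {FF K P} ≤ RingHom.ker (PhiT K P T) := by
      rw [Ideal.span_le]
      intro b hb
      rw [Set.mem_singleton_iff] at hb
      subst hb
      exact PhiT_F K P T
    exact RingHom.mem_ker.mp (hle ha))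

lemma PhiA_mk (p : MvPolynomial (Fin 2) K) :
    PhiA K P T (Ideal.Quotient.mk _ p) = PhiT K P T p := rfl

lemma PhiA_fst (a : HypAff K P) :
    fst (PhiA K P T a) = algebraMap (HypAff K P) T a := by
  obtain ⟨p, rfl⟩ := Ideal.Quotient.mk_surjective a
  have h : ((fstHom K T T).comp ((PhiA K P T).comp (Ideal.Quotient.mkₐ K _))) =
      (IsScalarTower.toAlgHom K (HypAff K P) T).comp (Ideal.Quotient.mkₐ K _) := by
    apply MvPolynomial.algHom_ext
    intro i
    fin_cases i
    · show fst (PhiA K P T (Ideal.Quotient.mk _ (MvPolynomial.X 0))) = _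
      rw [PhiA_mk, PhiT_X0]
      simp [xT, xA]
    · show fst (PhiA K P T (Ideal.Quotient.mk _ (MvPolynomial.X 1))) = _
      rw [PhiA_mk, PhiT_X1]
      simp [yT, yA]
  exact DFunLike.congr_fun h p

lemma PhiA_y_isUnit : IsUnit (PhiA K P T (yA K P)) := by
  have hy : PhiA K P T (yA K P) = inl (yT K P T) + inr (wT K P T) := by
    show PhiA K P T (Ideal.Quotient.mk _ (MvPolynomial.X 1)) = _
    rw [PhiA_mk, PhiT_X1]
  rw [hy]
  obtain ⟨yi, hyy⟩ := (yT_isUnit K P T).exists_right_inv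
  refine IsUnit.of_mul_eq_one (inl yi - inr (yi ^ 2 * wT K P T)) ?_
  rw [mul_sub, add_mul, add_mul, inl_mul_inl, inl_mul_inr, inr_mul_inl, inr_mul_inr,
    op_smul_eq_smul, smul_eq_mul, smul_eq_mul]
  ext
  · simp [hyy]
  · simp only [snd_sub, snd_add, snd_inl, snd_inr, snd_one, add_zero, zero_add, sub_zero,
      zero_sub]
    have h2 : yT K P T * (yi ^ 2 * wT K P T) = yi * wT K P T := by
      rw [sq, mul_comm yi yi, ← mul_assoc, ← mul_assoc, hyy, one_mul]
    rw [h2]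
    ring

end Generic
end HypProofAux
namespace HypProofAux
section Generic2
open TrivSqZeroExt Polynomial

variable (K : Type) [Field K] [CharZero K] (P : Polynomial K)
variable (T : Type) [CommRing T] [Algebra K T] [Algebra (HypAff K P) T]
  [IsScalarTower K (HypAff K P) T] [IsLocalization.Away (yA K P) T]

/-- the lifted map on the localized ring -/
def PhiR : T →+* TrivSqZeroExt T T :=
  IsLocalization.Away.lift (yA K P) (g := (PhiA K P T).toRingHom) (PhiA_y_isUnit K P T)

lemma PhiR_alg (a : HypAff K P) :
    PhiR K P T (algebraMap (HypAff K P) T a) = PhiA K P T a :=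
  IsLocalization.Away.lift_eq (yA K P) (PhiA_y_isUnit K P T) a

lemma PhiR_fst (t : T) : fst (PhiR K P T t) = t := by
  have h : ((fstHom K T T).toRingHom.comp (PhiR K P T)) = RingHom.id T := by
    apply IsLocalization.ringHom_ext (Submonoid.powers (yA K P))
    apply RingHom.ext
    intro a
    simp only [RingHom.coe_comp, Function.comp_apply, RingHom.id_apply]
    rw [PhiR_alg]
    exact PhiA_fst K P T a
  exact DFunLike.congr_fun h t

lemma PhiR_algK (c : K) :
    PhiR K P T (algebraMap K T c) = algebraMap K (TrivSqZeroExt T T) c := by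
  rw [IsScalarTower.algebraMap_apply K (HypAff K P) T, PhiR_alg]
  exact (PhiA K P T).commutes c

/-- the extended derivation on T -/
def deltaT : Derivation K T T where
  toFun t := snd (PhiR K P T t)
  map_add' a b := by
    show snd (PhiR K P T (a + b)) = snd (PhiR K P T a) + snd (PhiR K P T b)
    rw [map_add, snd_add]
  map_smul' c t := by
    show snd (PhiR K P T (c • t)) = c • snd (PhiR K P T t)
    rw [Algebra.smul_def, map_mul, snd_mul, PhiR_algK, algebraMap_eq_inl', snd_inl, fst_inl,
      op_smul_eq_smul, smul_zero, add_zero, smul_eq_mul, ← Algebra.smul_def]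
  map_one_eq_zero' := by
    show snd (PhiR K P T 1) = 0
    rw [map_one, snd_one]
  leibniz' a b := by
    show snd (PhiR K P T (a * b)) = a • snd (PhiR K P T b) + b • snd (PhiR K P T a)
    rw [map_mul, snd_mul, PhiR_fst, PhiR_fst, op_smul_eq_smul]

lemma deltaT_x : deltaT K P T (xT K P T) = 1 := by
  show snd (PhiR K P T (algebraMap (HypAff K P) T (xA K P))) = 1
  rw [PhiR_alg]
  show snd (PhiA K P T (Ideal.Quotient.mk _ (MvPolynomial.X 0))) = 1
  rw [PhiA_mk, PhiT_X0, snd_add, snd_inl, snd_inr, zero_add]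

end Generic2
end HypProofAux
namespace HypProofAux
section Generic3
open TrivSqZeroExt Polynomial

variable (K : Type) [Field K] [CharZero K] (P : Polynomial K)
variable (T : Type) [CommRing T] [Algebra K T] [Algebra (HypAff K P) T]
  [IsScalarTower K (HypAff K P) T] [IsLocalization.Away (yA K P) T]

lemma D_mem_span_y :
    KaehlerDifferential.D K T (yT K P T) ∈
      Submodule.span T {KaehlerDifferential.D K T (xT K P T)} := by
  set N := Submodule.span T {KaehlerDifferential.D K T (xT K P T)} with hN
  have h1 : KaehlerDifferential.D K T ((yT K P T) ^ 2) =
      (Polynomial.aeval (xT K P T) (derivative P)) • KaehlerDifferential.D K T (xT K P T) := by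
    rw [curve_rel_T, deriv_aeval_poly]
  rw [Derivation.leibniz_pow] at h1
  have h2 : (2 * yT K P T) • KaehlerDifferential.D K T (yT K P T) =
      (Polynomial.aeval (xT K P T) (derivative P)) • KaehlerDifferential.D K T (xT K P T) := by
    rw [← h1, pow_one, mul_smul, ← Nat.cast_smul_eq_nsmul T 2]
    norm_num
  obtain ⟨v, hv⟩ := (two_yT_isUnit K P T).exists_left_inv
  have h3 : KaehlerDifferential.D K T (yT K P T) =
      v • ((2 * yT K P T) • KaehlerDifferential.D K T (yT K P T)) := by
    rw [smul_smul, hv, one_smul]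
  rw [h3, h2, smul_smul]
  exact Submodule.smul_mem _ _ (Submodule.mem_span_singleton_self _)

lemma D_mem_span_alg (a : HypAff K P) :
    KaehlerDifferential.D K T (algebraMap (HypAff K P) T a) ∈
      Submodule.span T {KaehlerDifferential.D K T (xT K P T)} := by
  obtain ⟨p, rfl⟩ := Ideal.Quotient.mk_surjective a
  induction p using MvPolynomial.induction_on with
  | C c =>
    have : (algebraMap (HypAff K P) T) (Ideal.Quotient.mk _ (MvPolynomial.C c)) =
        algebraMap K T c := by
      rw [show (Ideal.Quotient.mk _ (MvPolynomial.C c) : HypAff K P) =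
          algebraMap K (HypAff K P) c from rfl, ← IsScalarTower.algebraMap_apply]
    rw [this, Derivation.map_algebraMap]
    exact Submodule.zero_mem _
  | add p q hp hq =>
    rw [map_add, map_add, map_add]
    exact Submodule.add_mem _ hp hq
  | mul_X p i hp =>
    rw [map_mul, map_mul, Derivation.leibniz]
    refine Submodule.add_mem _ (Submodule.smul_mem _ _ ?_) (Submodule.smul_mem _ _ hp)
    fin_cases i
    · exact Submodule.mem_span_singleton_self _
    · exact D_mem_span_y K P T

lemma D_mem_span_all (t : T) :
    KaehlerDifferential.D K T t ∈
      Submodule.span T {KaehlerDifferential.D K T (xT K P T)} := by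
  set N := Submodule.span T {KaehlerDifferential.D K T (xT K P T)} with hN
  obtain ⟨⟨a, s⟩, hmk⟩ := IsLocalization.mk'_surjective (Submonoid.powers (yA K P)) t
  obtain ⟨n, hn⟩ := s.2
  have hspec : t * algebraMap (HypAff K P) T (s : HypAff K P) =
      algebraMap (HypAff K P) T a := by
    rw [← hmk]
    exact IsLocalization.mk'_spec T a s
  have hsn : algebraMap (HypAff K P) T (s : HypAff K P) = (yT K P T) ^ n := by
    rw [← hn, map_pow]; rfl
  have hDyn : KaehlerDifferential.D K T ((yT K P T) ^ n) ∈ N := by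
    rw [Derivation.leibniz_pow, ← Nat.cast_smul_eq_nsmul T n]
    exact Submodule.smul_mem _ _ (Submodule.smul_mem _ _ (D_mem_span_y K P T))
  have hDa := D_mem_span_alg K P T a
  have key : ((yT K P T) ^ n) • KaehlerDifferential.D K T t ∈ N := by
    have hd := congrArg (KaehlerDifferential.D K T) hspec
    rw [Derivation.leibniz, hsn] at hd
    have : ((yT K P T) ^ n) • KaehlerDifferential.D K T t =
        KaehlerDifferential.D K T (algebraMap (HypAff K P) T a)
          - t • KaehlerDifferential.D K T ((yT K P T) ^ n) := by
      rw [← hd]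
      abel
    rw [this]
    exact Submodule.sub_mem _ hDa (Submodule.smul_mem _ _ hDyn)
  obtain ⟨v, hv⟩ := ((yT_isUnit K P T).pow n).exists_left_inv
  have : KaehlerDifferential.D K T t = v • (((yT K P T) ^ n) • KaehlerDifferential.D K T t) := by
    rw [smul_smul, hv, one_smul]
  rw [this]
  exact Submodule.smul_mem _ _ key

theorem main_generic :
    Function.Bijective (fun f : T => f • KaehlerDifferential.D K T (xT K P T)) := by
  constructor
  · intro f g hfg
    have h1 := congrArg (deltaT K P T).liftKaehlerDifferential hfg
    simp only [map_smul, Derivation.liftKaehlerDifferential_comp_D, deltaT_x K P T,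
      smul_eq_mul, mul_one] at h1
    exact h1
  · intro ω
    have hmem : ω ∈ Submodule.span T {KaehlerDifferential.D K T (xT K P T)} := by
      have htop : (⊤ : Submodule T (Ω[T⁄K])) ≤
          Submodule.span T {KaehlerDifferential.D K T (xT K P T)} := by
        rw [← KaehlerDifferential.span_range_derivation K T]
        rw [Submodule.span_le]
        rintro _ ⟨t, rfl⟩
        exact D_mem_span_all K P T t
      exact htop trivial
    obtain ⟨f, hf⟩ := Submodule.mem_span_singleton.mp hmem
    exact ⟨f, hf⟩

end Generic3
end HypProofAux
/-- The module of Kähler differentials `Ω¹_{R/K}` is free of rank 1 over `R` with basis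
`{D x}`: the `R`-linear map `f ↦ f • D x` is a bijection from `R` to `Ω¹_{R/K}`. -/
theorem kaehler_free_rank_one (K : Type) [Field K] [CharZero K] (g : ℕ) (hg : 1 ≤ g)
    (P : Polynomial K) (hmonic : P.Monic) (hdeg : P.natDegree = 2 * g + 1) :
    Function.Bijective (fun f : HypRing K P => f • DR K P (xR K P)) :=
  HypProofAux.main_generic K P (HypRing K P)
end
end

section
/- Assume in addition that P is squarefree. For every polynomial A ∈ K[X] and every odd integer s (of either sign), there exist scalars c₀,…,c_{2g−1} ∈ K and an element f ∈ R such that, in Ω¹_{R/K}, A(x)·y^{−s} • D x = ∑_{i=0}^{2g−1} c_i · (x^i·y^{−1} • D x) + D f. (Every differential form supported in odd powers of y is cohomologous to a K-linear combination of the forms x^i dx/y, 0 ≤ i ≤ 2g−1.) -/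
set_option synthInstance.maxHeartbeats 1000000
set_option maxHeartbeats 1000000

noncomputable section

instance (K : Type) [Field K] (P : Polynomial K) :
    MulAction (HypRing K P) (Ω[HypRing K P⁄K]) :=
  (inferInstance : Module (HypRing K P) (Ω[HypRing K P⁄K])).toDistribMulAction.toMulAction
instance (K : Type) [Field K] (P : Polynomial K) :
    MulAction K (Ω[HypRing K P⁄K]) :=
  (inferInstance : Module K (Ω[HypRing K P⁄K])).toDistribMulAction.toMulAction
instance (K : Type) [Field K] (P : Polynomial K) :
    IsScalarTower K (HypRing K P) (Ω[HypRing K P⁄K]) :=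
  inferInstanceAs (IsScalarTower K (HypRing K P) (Ω[HypRing K P⁄K]))


set_option linter.unusedSectionVars false
variable (K : Type) [Field K] [CharZero K] (P : Polynomial K)

lemma ypow_add (a b : ℤ) : ypow K P (a+b) = ypow K P a * ypow K P b := by
  rw [ypow, zpow_add]; rfl

lemma ypow_natCast (n : ℕ) : ypow K P (n : ℤ) = (ypow K P 1) ^ n := by
  rw [ypow, ypow, zpow_natCast, zpow_one, Units.val_pow_eq_pow_val]

lemma ypow_neg_mul (a : ℤ) : ypow K P (-a) * ypow K P a = 1 := by
  rw [← ypow_add, neg_add_cancel, ypow, zpow_zero, Units.val_one]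
lemma y_sq : ypow K P 2 = Polynomial.aeval (xR K P) P := by
  have hy : ((yU K P : (HypRing K P)ˣ) : HypRing K P)
      = algebraMap (HypAff K P) (HypRing K P) (yA K P) :=
    (IsLocalization.Away.algebraMap_isUnit (S := HypRing K P) (yA K P)).unit_spec
  have h1 : ypow K P 2 = algebraMap (HypAff K P) (HypRing K P) ((yA K P) ^ 2) := by
    rw [ypow, zpow_two, Units.val_mul, hy, ← map_mul, ← sq]
  have h2 : (yA K P) ^ 2 = Ideal.Quotient.mk _ (Polynomial.aeval (MvPolynomial.X 0) P) := by
    rw [yA, ← map_pow, Ideal.Quotient.eq]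
    exact Ideal.subset_span rfl
  have h3 : (Ideal.Quotient.mk (Ideal.span {(MvPolynomial.X 1 : MvPolynomial (Fin 2) K) ^ 2 -
        Polynomial.aeval (MvPolynomial.X 0) P})) (Polynomial.aeval (MvPolynomial.X 0) P)
      = Polynomial.aeval (Ideal.Quotient.mk _ (MvPolynomial.X 0 : MvPolynomial (Fin 2) K)) P := by
    rw [← Ideal.Quotient.mkₐ_eq_mk K, ← Polynomial.aeval_algHom_apply]
  rw [h1, h2, h3, xR]
  exact (Polynomial.aeval_algebraMap_apply _ _ _).symm

lemma two_eq : (2 : HypRing K P) = algebraMap K (HypRing K P) 2 :=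
  (map_ofNat (algebraMap K (HypRing K P)) 2).symm

section smul
variable (a b : HypRing K P) (c : K) (m : Ω[HypRing K P⁄K])
lemma sAdd : (a+b) • m = a • m + b • m := add_smul a b m
lemma sMulSmul : a • (b • m) = (a*b) • m := smul_smul a b m
lemma sOne : (1 : HypRing K P) • m = m := one_smul _ m
lemma sZero : (0 : HypRing K P) • m = 0 := by
  have h := sAdd K P 0 0 m
  rw [show (0 : HypRing K P) + 0 = 0 by ring] at h
  exact (left_eq_add.mp h)
lemma sNeg : (-a) • m = -(a • m) := by
  have h := sAdd K P a (-a) m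
  rw [show a + -a = 0 from add_neg_cancel a, sZero] at h
  exact (neg_eq_of_add_eq_zero_right h.symm).symm
lemma sAlg : (algebraMap K (HypRing K P) c) • m = c • m := algebraMap_smul _ c m
lemma sKsmul : c • (a • m) = (algebraMap K (HypRing K P) c * a) • m := by
  rw [← sAlg K P c (a • m)]; exact sMulSmul K P _ a m
end smul

lemma Dy : DR K P (ypow K P 1) =
    (algebraMap K (HypRing K P) 2⁻¹ * ypow K P (-1) *
      Polynomial.aeval (xR K P) (Polynomial.derivative P)) • DR K P (xR K P) := by
  have h2 : ypow K P 1 * ypow K P 1 = Polynomial.aeval (xR K P) P := by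
    rw [← ypow_add]; exact y_sq K P
  have hD := congrArg (DR K P) h2
  rw [Derivation.leibniz, Derivation.map_aeval] at hD
  have hsum : (ypow K P 1 + ypow K P 1) • DR K P (ypow K P 1)
      = Polynomial.aeval (xR K P) (Polynomial.derivative P) • DR K P (xR K P) :=
    (sAdd K P _ _ _).trans hD
  have hunit : algebraMap K (HypRing K P) 2⁻¹ * ypow K P (-1) * (ypow K P 1 + ypow K P 1) = 1 := by
    have e2 : algebraMap K (HypRing K P) 2⁻¹ * ypow K P (-1) * (ypow K P 1 + ypow K P 1)
        = algebraMap K (HypRing K P) 2⁻¹ * (ypow K P (-1) * ypow K P 1) * 2 := by ring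
    rw [e2, ypow_neg_mul, mul_one, two_eq, ← map_mul, inv_mul_cancel₀ two_ne_zero, map_one]
  calc DR K P (ypow K P 1)
      = (algebraMap K (HypRing K P) 2⁻¹ * ypow K P (-1) * (ypow K P 1 + ypow K P 1)) •
          DR K P (ypow K P 1) := by rw [hunit, sOne]
    _ = (algebraMap K (HypRing K P) 2⁻¹ * ypow K P (-1)) •
          ((ypow K P 1 + ypow K P 1) • DR K P (ypow K P 1)) := mul_smul _ _ _
    _ = _ := by rw [hsum, sMulSmul]

lemma Dypow_nat (n : ℕ) : DR K P (ypow K P (n : ℤ))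
    = (((n : ℤ) : HypRing K P) * ypow K P ((n : ℤ)-1)) • DR K P (ypow K P 1) := by
  cases n with
  | zero =>
    have h0 : ypow K P ((0:ℕ) : ℤ) = 1 := by rw [ypow]; norm_num
    have h1 : (((0:ℕ):ℤ) : HypRing K P) * ypow K P (((0:ℕ):ℤ)-1) = 0 := by
      have e : (((0:ℕ):ℤ) : HypRing K P) = 0 := by norm_cast
      rw [e]; ring
    rw [h0, Derivation.map_one_eq_zero, h1, sZero]
  | succ n =>
    rw [ypow_natCast, Derivation.leibniz_pow, ← Nat.cast_smul_eq_nsmul (HypRing K P), sMulSmul]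
    refine congrArg (fun r => r • DR K P (ypow K P 1)) ?_
    have h1 : ypow K P (((n+1:ℕ):ℤ)-1) = ypow K P 1 ^ n := by
      rw [show ((n+1:ℕ):ℤ)-1 = (n:ℤ) by push_cast; ring, ypow_natCast]
    rw [h1, show n + 1 - 1 = n from rfl]
    have e : (((n+1:ℕ):ℤ) : HypRing K P) = ((n+1:ℕ) : HypRing K P) := by norm_cast
    try rw [e]
    try ring

lemma Dypow (m : ℤ) : DR K P (ypow K P m)
    = ((m : HypRing K P) * ypow K P (m-1)) • DR K P (ypow K P 1) := by
  rcases le_or_gt 0 m with hm | hm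
  · lift m to ℕ using hm; exact Dypow_nat K P m
  · obtain ⟨n, rfl⟩ : ∃ n : ℕ, m = -((n+1:ℕ):ℤ) := ⟨(-m-1).toNat, by omega⟩
    set N : ℤ := ((n+1:ℕ):ℤ) with hN
    have hrel : ypow K P (-N) * ypow K P N = 1 := ypow_neg_mul K P _
    have hD := congrArg (DR K P) hrel
    rw [Derivation.leibniz, Derivation.map_one_eq_zero] at hD
    have h1 : ypow K P N • DR K P (ypow K P (-N))
        = - (ypow K P (-N) • DR K P (ypow K P N)) := by
      rw [eq_neg_iff_add_eq_zero, add_comm]; exact hD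
    have h3 : DR K P (ypow K P N)
        = ((N : HypRing K P) * ypow K P (N-1)) • DR K P (ypow K P 1) := Dypow_nat K P (n+1)
    have e1 : ypow K P (-N) * (ypow K P (-N) * ypow K P (N-1)) = ypow K P (-N-1) := by
      rw [← ypow_add, ← ypow_add]; congr 1; ring
    calc DR K P (ypow K P (-N))
        = ypow K P (-N) • (ypow K P N • DR K P (ypow K P (-N))) := by
          rw [sMulSmul, ypow_neg_mul, sOne]
      _ = ypow K P (-N) • (- (ypow K P (-N) • DR K P (ypow K P N))) := by rw [h1]
      _ = ypow K P (-N) • (- ((ypow K P (-N) * ((N : HypRing K P) * ypow K P (N-1))) •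
            DR K P (ypow K P 1))) := by rw [h3, sMulSmul]
      _ = (ypow K P (-N) * -(ypow K P (-N) * ((N : HypRing K P) * ypow K P (N-1)))) •
            DR K P (ypow K P 1) := by rw [← sNeg, sMulSmul]
      _ = (((-N : ℤ) : HypRing K P) * ypow K P (-N-1)) • DR K P (ypow K P 1) := by
          refine congrArg (fun r => r • DR K P (ypow K P 1)) ?_
          rw [show ypow K P (-N) * -(ypow K P (-N) * ((N : HypRing K P) * ypow K P (N-1)))
              = -((N : HypRing K P) * (ypow K P (-N) * (ypow K P (-N) * ypow K P (N-1)))) from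
                by ring, e1]
          have e : (((-N : ℤ)) : HypRing K P) = -((N : ℤ) : HypRing K P) := by norm_cast
          rw [e]; ring

/-- The differential form `B(x) y^m dx`. -/
def wf (B : Polynomial K) (m : ℤ) : Ω[HypRing K P⁄K] :=
  (Polynomial.aeval (xR K P) B * ypow K P m) • DR K P (xR K P)

lemma ypow_sub_two (m : ℤ) : ypow K P (m-2) = ypow K P (m-1) * ypow K P (-1) := by
  rw [← ypow_add]; congr 1; ring

lemma master (V : Polynomial K) (m : ℤ) :
    DR K P (Polynomial.aeval (xR K P) V * ypow K P m)
      = wf K P V.derivative m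
        + ((m : K) * 2⁻¹) • wf K P (V * Polynomial.derivative P) (m-2) := by
  rw [Derivation.leibniz, Dypow, Dy, Derivation.map_aeval, sMulSmul, sMulSmul, sMulSmul]
  rw [wf, wf]
  rw [sKsmul]
  rw [add_comm]
  congr 1
  · -- second term of leibniz matches wf V' m
    ring
  · -- main term
    have ec : ((m:ℤ) : HypRing K P) = algebraMap K (HypRing K P) ((m:ℤ):K) := by
      rw [map_intCast]
    rw [ec,
      map_mul (algebraMap K (HypRing K P)), map_mul (Polynomial.aeval (xR K P)),
      ypow_sub_two]
    ring

lemma wf_add (B C : Polynomial K) (m : ℤ) :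
    wf K P (B + C) m = wf K P B m + wf K P C m := by
  rw [wf, wf, wf, map_add, show (Polynomial.aeval (xR K P) B + Polynomial.aeval (xR K P) C)
      * ypow K P m = Polynomial.aeval (xR K P) B * ypow K P m
      + Polynomial.aeval (xR K P) C * ypow K P m from by ring, sAdd]

lemma wf_Ksmul (c : K) (B : Polynomial K) (m : ℤ) :
    wf K P (Polynomial.C c * B) m = c • wf K P B m := by
  rw [wf, wf, map_mul, Polynomial.aeval_C, sKsmul]
  exact congrArg (fun r => r • DR K P (xR K P)) (by ring)

lemma wf_shift (B : Polynomial K) (m : ℤ) :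
    wf K P (B * P) m = wf K P B (m + 2) := by
  rw [wf, wf, map_mul, ← y_sq, show ypow K P (m+2) = ypow K P m * ypow K P 2 from by
    rw [← ypow_add]]
  exact congrArg (fun r => r • DR K P (xR K P)) (by ring)

/-- The submodule of reduced + exact forms. -/
def Esub (g : ℕ) : Submodule K (Ω[HypRing K P⁄K]) :=
  Submodule.span K (Set.range fun i : Fin (2*g) =>
      (xR K P ^ (i:ℕ) * ypow K P (-1)) • DR K P (xR K P))
    ⊔ LinearMap.range (DR K P).toLinearMap

lemma exact_mem (g : ℕ) (f : HypRing K P) : DR K P f ∈ Esub K P g :=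
  Submodule.mem_sup_right (LinearMap.mem_range.mpr ⟨f, rfl⟩)

lemma wf_small_mem (g : ℕ) (B : Polynomial K) (hB : B.natDegree < 2*g) :
    wf K P B (-1) ∈ Esub K P g := by
  refine Submodule.mem_sup_left ?_
  rw [wf, Polynomial.aeval_eq_sum_range' hB, Finset.sum_mul, Finset.sum_smul]
  refine Submodule.sum_mem _ fun i hi => ?_
  have h1 : (B.coeff i • xR K P ^ i) * ypow K P (-1)
      = B.coeff i • (xR K P ^ i * ypow K P (-1)) := smul_mul_assoc _ _ _
  rw [h1, smul_assoc]
  exact Submodule.smul_mem _ _ (Submodule.subset_span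
    ⟨⟨i, Finset.mem_range.mp hi⟩, rfl⟩)

/-- The polynomial `Q_j` with `d(x^j y) = Q_j(x) y^{-1} dx`. -/
def Qex (g : ℕ) (j : ℕ) : Polynomial K :=
  Polynomial.derivative (Polynomial.X ^ j) * P
    + Polynomial.C (2⁻¹ : K) * (Polynomial.X ^ j * Polynomial.derivative P)

lemma Qex_exact (g : ℕ) (j : ℕ) :
    DR K P (Polynomial.aeval (xR K P) ((Polynomial.X : Polynomial K) ^ j) * ypow K P 1)
      = wf K P (Qex K P g j) (-1) := by
  have h := master K P ((Polynomial.X : Polynomial K) ^ j) 1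
  rw [h, Qex, wf_add, wf_Ksmul]
  have hs := wf_shift K P (Polynomial.derivative (Polynomial.X ^ j : Polynomial K)) (-1)
  rw [show (-1:ℤ)+2 = 1 from by norm_num] at hs
  rw [← hs]
  congr 1
  norm_num

lemma Qex_natDegree_le (g : ℕ) (hmonic : P.Monic) (hdeg : P.natDegree = 2*g+1) (j : ℕ) :
    (Qex K P g j).natDegree ≤ j + 2*g := by
  refine le_trans (Polynomial.natDegree_add_le _ _) (max_le ?_ ?_)
  · cases j with
    | zero => simp
    | succ k =>
      rw [Polynomial.derivative_X_pow]
      have h1 : (Polynomial.C (((k+1 : ℕ)) : K) * Polynomial.X ^ (k+1-1)).natDegree ≤ k := by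
        refine le_trans Polynomial.natDegree_mul_le ?_
        rw [Polynomial.natDegree_C, Polynomial.natDegree_X_pow]
        omega
      refine le_trans Polynomial.natDegree_mul_le ?_
      rw [hdeg]
      omega
  · have h2 : ((Polynomial.X : Polynomial K) ^ j * Polynomial.derivative P).natDegree
        ≤ j + 2*g := by
      refine le_trans Polynomial.natDegree_mul_le ?_
      rw [Polynomial.natDegree_X_pow]
      have := Polynomial.natDegree_derivative_le P
      omega
    refine le_trans Polynomial.natDegree_mul_le ?_
    rw [Polynomial.natDegree_C]
    omega

lemma Qex_coeff_top (g : ℕ) (hmonic : P.Monic) (hdeg : P.natDegree = 2*g+1) (j : ℕ) :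
    (Qex K P g j).coeff (j + 2*g) = (j : K) + 2⁻¹ * ((2*g+1 : ℕ) : K) := by
  have hP' : (Polynomial.derivative P).coeff (2*g) = ((2*g+1 : ℕ) : K) := by
    rw [Polynomial.coeff_derivative, show 2*g+1 = P.natDegree from hdeg.symm,
      hmonic.coeff_natDegree, one_mul, hdeg]
    push_cast; ring
  rw [Qex, Polynomial.coeff_add, Polynomial.coeff_C_mul]
  congr 1
  · -- coeff (derivative (X^j) * P) (j+2g) = j
    cases j with
    | zero => simp
    | succ k =>
      rw [Polynomial.derivative_X_pow, mul_assoc, Polynomial.coeff_C_mul,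
        show k + 1 - 1 = k from rfl,
        show k + 1 + 2*g = (2*g+1) + k from by omega,
        Polynomial.coeff_X_pow_mul, ← hdeg, hmonic.coeff_natDegree, mul_one]
  · -- 2⁻¹ * coeff (X^j * P') (j + 2g)
    rw [show j + 2*g = 2*g + j from by omega, Polynomial.coeff_X_pow_mul, hP']

lemma wf_zero (m : ℤ) : wf K P 0 m = 0 := by
  rw [wf, map_zero, show (0 : HypRing K P) * ypow K P m = 0 from by ring, sZero]

lemma redDeg (g : ℕ) (hg : 1 ≤ g) (hmonic : P.Monic) (hdeg : P.natDegree = 2*g+1) :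
    ∀ n : ℕ, ∀ B : Polynomial K, B.natDegree ≤ n → wf K P B (-1) ∈ Esub K P g := by
  intro n
  induction n using Nat.strong_induction_on with
  | _ n IH =>
    intro B hBn
    by_cases hsmall : B.natDegree < 2*g
    · exact wf_small_mem K P g B hsmall
    · push_neg at hsmall
      set d := B.natDegree with hd
      set j := d - 2*g with hj
      have hjd : j + 2*g = d := by omega
      set c : K := (j : K) + 2⁻¹ * ((2*g+1 : ℕ) : K) with hc
      have hcne : c ≠ 0 := by
        intro h0
        have h2 : (2:K) * c = ((2*j + 2*g + 1 : ℕ) : K) := by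
          rw [hc]; push_cast; ring
        rw [h0, mul_zero] at h2
        exact (Nat.cast_ne_zero (R := K)).mpr (by omega) h2.symm
      set lam : K := B.coeff d / c with hlam
      set B' : Polynomial K := B - Polynomial.C lam * Qex K P g j with hB'
      have hQd : (Qex K P g j).natDegree ≤ d := hjd ▸ Qex_natDegree_le K P g hmonic hdeg j
      have hQc : (Qex K P g j).coeff d = c := by
        rw [← hjd]; exact Qex_coeff_top K P g hmonic hdeg j
      have hB'coeff : ∀ i : ℕ, d ≤ i → B'.coeff i = 0 := by
        intro i hi
        rcases eq_or_lt_of_le hi with rfl | hlt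
        · rw [hB', Polynomial.coeff_sub, Polynomial.coeff_C_mul, hQc, hlam,
            div_mul_cancel₀ _ hcne, sub_self]
        · rw [hB', Polynomial.coeff_sub, Polynomial.coeff_C_mul,
            Polynomial.coeff_eq_zero_of_natDegree_lt (lt_of_le_of_lt hQd hlt),
            Polynomial.coeff_eq_zero_of_natDegree_lt (by omega), mul_zero, sub_zero]
      have hsplit : B = B' + Polynomial.C lam * Qex K P g j := by
        rw [hB']; ring
      have hmem2 : wf K P (Polynomial.C lam * Qex K P g j) (-1) ∈ Esub K P g := by
        rw [wf_Ksmul]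
        refine Submodule.smul_mem _ _ ?_
        rw [← Qex_exact K P g j]
        exact exact_mem K P g _
      have hmem1 : wf K P B' (-1) ∈ Esub K P g := by
        by_cases hB'0 : B' = 0
        · rw [hB'0, wf_zero]; exact Submodule.zero_mem _
        · have hdeglt : B'.natDegree < d := by
            rw [Polynomial.natDegree_lt_iff_degree_lt hB'0]
            exact (Polynomial.degree_lt_iff_coeff_zero _ _).mpr
              (fun m hm => hB'coeff m (by exact_mod_cast hm))
          exact IH B'.natDegree (by omega) B' le_rfl
      rw [hsplit, wf_add]
      exact Submodule.add_mem _ hmem1 hmem2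

lemma redExp (g : ℕ) (hg : 1 ≤ g) (hmonic : P.Monic) (hdeg : P.natDegree = 2*g+1)
    (hsf : Squarefree P) :
    ∀ k : ℕ, ∀ B : Polynomial K, wf K P B (-(2*(k:ℤ)+1)) ∈ Esub K P g := by
  intro k
  induction k with
  | zero =>
    intro B
    rw [show -(2*((0:ℕ):ℤ)+1) = (-1 : ℤ) from by norm_num]
    exact redDeg K P g hg hmonic hdeg B.natDegree B le_rfl
  | succ k IH =>
    intro B
    set m : ℤ := -(2*(k:ℤ)+1) with hm
    have hM : -(2*((k+1:ℕ):ℤ)+1) = m - 2 := by rw [hm]; push_cast; ring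
    rw [hM]
    have hsep : P.Separable := PerfectField.separable_iff_squarefree.mpr hsf
    obtain ⟨a, b, hab⟩ := hsep
    have hsplit : B = (B*a)*P + (B*b)*Polynomial.derivative P := by
      have hh : B * (a * P + b * Polynomial.derivative P) = B * 1 := by rw [hab]
      rw [mul_one] at hh
      conv_lhs => rw [← hh]
      ring
    rw [hsplit, wf_add]
    refine Submodule.add_mem _ ?_ ?_
    · rw [wf_shift, show m - 2 + 2 = m from by ring]
      exact IH (B*a)
    · have h := master K P (B*b) m
      set cm : K := (m:K) * 2⁻¹ with hcm
      have hmne : (m : K) ≠ 0 := by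
        rw [Int.cast_ne_zero]; omega
      have hcmne : cm ≠ 0 := by
        rw [hcm]; exact mul_ne_zero hmne (by norm_num)
      have h2 : cm • wf K P ((B*b) * Polynomial.derivative P) (m-2)
          = DR K P (Polynomial.aeval (xR K P) (B*b) * ypow K P m)
            - wf K P (Polynomial.derivative (B*b)) m := by
        rw [eq_sub_iff_add_eq, add_comm]; exact h.symm
      have h3 : wf K P ((B*b) * Polynomial.derivative P) (m-2)
          = cm⁻¹ • (DR K P (Polynomial.aeval (xR K P) (B*b) * ypow K P m)
            - wf K P (Polynomial.derivative (B*b)) m) := by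
        rw [← h2, smul_smul, inv_mul_cancel₀ hcmne, one_smul]
      rw [h3]
      exact Submodule.smul_mem _ _ (Submodule.sub_mem _ (exact_mem K P g _)
        (IH (Polynomial.derivative (B*b))))

lemma redPos (g : ℕ) (hg : 1 ≤ g) (hmonic : P.Monic) (hdeg : P.natDegree = 2*g+1) :
    ∀ k : ℕ, ∀ B : Polynomial K, wf K P B (2*(k:ℤ)+1) ∈ Esub K P g := by
  intro k
  induction k with
  | zero =>
    intro B
    have hs := wf_shift K P B (-1)
    rw [show (-1:ℤ)+2 = 1 from by norm_num] at hs
    rw [show 2*((0:ℕ):ℤ)+1 = (1:ℤ) from by norm_num, ← hs]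
    exact redDeg K P g hg hmonic hdeg _ _ le_rfl
  | succ k IH =>
    intro B
    have hs := wf_shift K P B (2*(k:ℤ)+1)
    rw [show 2*((k+1:ℕ):ℤ)+1 = 2*(k:ℤ)+1+2 from by push_cast; ring, ← hs]
    exact IH (B*P)

theorem reduce_to_basis_odd' (g : ℕ) (hg : 1 ≤ g)
    (hmonic : P.Monic) (hdeg : P.natDegree = 2 * g + 1)
    (hsf : Squarefree P) (A : Polynomial K) (s : ℤ) (hodd : Odd s) :
    ∃ (c : Fin (2 * g) → K) (f : HypRing K P),
      (Polynomial.aeval (xR K P) A * ypow K P (-s)) • DR K P (xR K P) =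
        (∑ i : Fin (2 * g),
          c i • ((xR K P ^ (i : ℕ) * ypow K P (-1)) • DR K P (xR K P))) +
        DR K P f := by
  obtain ⟨t, ht⟩ := hodd
  have hmem : wf K P A (-s) ∈ Esub K P g := by
    rcases le_or_gt 0 t with h | h
    · rw [show -s = -(2*((t.toNat : ℕ):ℤ)+1) from by push_cast; omega]
      exact redExp K P g hg hmonic hdeg hsf t.toNat A
    · rw [show -s = 2*(((-t-1).toNat : ℕ):ℤ)+1 from by push_cast; omega]
      exact redPos K P g hg hmonic hdeg (-t-1).toNat A
  obtain ⟨p, hp, q, hq, hpq⟩ := Submodule.mem_sup.mp hmem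
  obtain ⟨c, hc⟩ := (Submodule.mem_span_range_iff_exists_fun K).mp hp
  obtain ⟨f, hf⟩ := LinearMap.mem_range.mp hq
  refine ⟨c, f, ?_⟩
  show wf K P A (-s) = _
  rw [← hpq, ← hc, ← hf]
  rfl

/-- Assume `P` squarefree. Every differential `A(x) y^{-s} dx` with `s` odd is cohomologous
to a `K`-linear combination of the forms `x^i dx/y`, `0 ≤ i ≤ 2g - 1`: there are scalars
`c_i ∈ K` and `f ∈ R` with `A(x) y^{-s} dx = ∑ c_i x^i y^{-1} dx + df` in `Ω¹_{R/K}`. -/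
theorem reduce_to_basis_odd (K : Type) [Field K] [CharZero K] (g : ℕ) (hg : 1 ≤ g)
    (P : Polynomial K) (hmonic : P.Monic) (hdeg : P.natDegree = 2 * g + 1)
    (hsf : Squarefree P) (A : Polynomial K) (s : ℤ) (hodd : Odd s) :
    ∃ (c : Fin (2 * g) → K) (f : HypRing K P),
      (Polynomial.aeval (xR K P) A * ypow K P (-s)) • DR K P (xR K P) =
        (∑ i : Fin (2 * g),
          c i • ((xR K P ^ (i : ℕ) * ypow K P (-1)) • DR K P (xR K P))) +
        DR K P f := by
  exact reduce_to_basis_odd' K P g hg hmonic hdeg hsf A s hodd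
end
end

section
/- Let F be a perfect field of characteristic p (p a prime) and let H ∈ F[X] be a squarefree polynomial. Then the Frobenius map a ↦ a^p is a bijection of the quotient ring F[X]/(H) onto itself. (In particular, for F of characteristic 2 and any f ∈ F[X], there exists a ∈ F[X] with a² ≡ f (mod H); this allows one to normalize the defining equation y² + h(x)y = f(x) of a hyperelliptic curve in characteristic 2 so that f vanishes at each root of the squarefree part H of h.) -/
open Polynomial UniqueFactorizationMonoid

lemma frobenius_bijective_perfectField (p : ℕ) (K : Type) [Field K] [ExpChar K p]
    [PerfectField K] : Function.Bijective (fun y : K => y ^ p) := by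
  have h : Function.Bijective (frobenius K p) := PerfectRing.bijective_frobenius
  have e : (fun y : K => y ^ p) = ⇑(frobenius K p) := by
    funext y; rw [frobenius_def]
  rw [e]; exact h

/-- Frobenius is bijective on `AdjoinRoot g` for `g` irreducible over a perfect field. -/
lemma frobenius_bijective_adjoinRoot (p : ℕ) (hp : p.Prime) (F : Type) [Field F]
    [CharP F p] [ExpChar F p] [PerfectRing F p] (g : Polynomial F) (hg : Irreducible g) :
    Function.Bijective (fun y : AdjoinRoot g => y ^ p) := by
  haveI := Fact.mk hg
  haveI : CharP (AdjoinRoot g) p :=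
    charP_of_injective_algebraMap (algebraMap F (AdjoinRoot g)).injective p
  haveI : ExpChar (AdjoinRoot g) p := ExpChar.prime hp
  haveI : Module.Finite F (AdjoinRoot g) := (AdjoinRoot.powerBasis hg.ne_zero).finite
  haveI : Algebra.IsAlgebraic F (AdjoinRoot g) := Algebra.IsAlgebraic.of_finite F _
  haveI : PerfectField F := PerfectRing.toPerfectField F p
  haveI : PerfectField (AdjoinRoot g) := Algebra.IsAlgebraic.perfectField (K := F)
  exact frobenius_bijective_perfectField p (AdjoinRoot g)

/-- If `F` is a perfect field of characteristic `p` (`p` prime) and `H ∈ F[X]` is squarefree,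
then the Frobenius map `a ↦ a^p` is a bijection of the quotient ring `F[X]/(H)` onto
itself. (The instance `ExpChar F p` is forced by `CharP F p` and `hp : p.Prime`; it is
assumed here only so that `PerfectRing F p` can be stated.) -/
theorem frobenius_bijective_quotient (p : ℕ) (hp : p.Prime) (F : Type) [Field F]
    [CharP F p] [ExpChar F p] [PerfectRing F p] (H : Polynomial F) (hH : Squarefree H) :
    Function.Bijective
      (fun a : Polynomial F ⧸ Ideal.span {H} => a ^ p) := by
  classical
  by_cases hu : IsUnit H
  · haveI : Subsingleton (Polynomial F ⧸ Ideal.span {H}) := by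
      rw [Ideal.Quotient.subsingleton_iff, Ideal.span_singleton_eq_top.mpr hu]
    exact ⟨fun a b _ => Subsingleton.elim a b, fun a => ⟨a, Subsingleton.elim _ _⟩⟩
  have hH0 : H ≠ 0 := hH.ne_zero
  set m := normalizedFactors H with hm
  have hnd : m.Nodup := (squarefree_iff_nodup_normalizedFactors hH0).mp hH
  set s := m.toFinset with hs
  have prod_eq : (∏ g ∈ s, Ideal.span {g} ^ 1) = Ideal.span {H} := by
    simp only [pow_one]
    rw [Ideal.prod_span_singleton]
    rw [Ideal.span_singleton_eq_span_singleton]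
    have : ∏ g ∈ s, g = m.prod := by
      rw [hs, Finset.prod_eq_multiset_prod, Multiset.toFinset_val, hnd.dedup,
        Multiset.map_id']
    rw [this]
    exact prod_normalizedFactors hH0
  have prime : ∀ g ∈ s, Prime g := fun g hg =>
    prime_of_normalized_factor g (Multiset.mem_toFinset.mp hg)
  have primeI : ∀ g ∈ s, Prime (Ideal.span {g}) := fun g hg =>
    (Ideal.prime_iff_isPrime (by
      simpa [Ideal.span_singleton_eq_bot] using (prime g hg).ne_zero)).mpr
      ((Ideal.span_singleton_prime (prime g hg).ne_zero).mpr (prime g hg))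
  have copr : ∀ g ∈ s, ∀ g' ∈ s, g ≠ g' → Ideal.span {g} ≠ Ideal.span {g'} := by
    intro g hg g' hg' hne h
    apply hne
    rw [Ideal.span_singleton_eq_span_singleton] at h
    rw [← normalize_normalized_factor g (Multiset.mem_toFinset.mp hg),
      ← normalize_normalized_factor g' (Multiset.mem_toFinset.mp hg')]
    exact normalize_eq_normalize h.dvd h.symm.dvd
  let e := IsDedekindDomain.quotientEquivPiOfFinsetProdEq (Ideal.span {H})
    (fun g => Ideal.span {g}) (fun _ => 1) primeI
    (fun g hg g' hg' hne => copr g hg g' hg' hne) prod_eq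
  have hpi : Function.Bijective
      (fun (x : ∀ g : s, Polynomial F ⧸ Ideal.span {(g : Polynomial F)} ^ 1)
        (g : s) => x g ^ p) := by
    apply Function.Bijective.piMap
    intro g
    have hb := frobenius_bijective_adjoinRoot p hp F g (prime g g.2).irreducible
    let q : (Polynomial F ⧸ Ideal.span {(g : Polynomial F)} ^ 1) ≃+*
        AdjoinRoot (g : Polynomial F) :=
      Ideal.quotEquivOfEq (pow_one (Ideal.span {(g : Polynomial F)}))
    have key' : (fun y : Polynomial F ⧸ Ideal.span {(g : Polynomial F)} ^ 1 => y ^ p) =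
        q.symm ∘ (fun y : AdjoinRoot (g : Polynomial F) => y ^ p) ∘ q := by
      funext y
      simp only [Function.comp_apply]
      apply q.injective
      rw [RingEquiv.apply_symm_apply, map_pow]
    show Function.Bijective
      (fun y : Polynomial F ⧸ Ideal.span {(g : Polynomial F)} ^ 1 => y ^ p)
    rw [key']
    exact q.symm.bijective.comp (hb.comp q.bijective)
  have key : (fun a : Polynomial F ⧸ Ideal.span {H} => a ^ p) =
      e.symm ∘ (fun x g => x g ^ p) ∘ e := by
    funext a
    simp only [Function.comp_apply]
    apply e.injective
    rw [RingEquiv.apply_symm_apply, map_pow]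
    rfl
  rw [key]
  exact e.symm.bijective.comp (hpi.comp e.bijective)
end
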